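/- arXiv:2408.04538 — 4 statements merged into one kernel-verified Lean document; each statement's English description precedes it below -/
import Mathlib

section
/- If G is a robustly critical graph, then G ∨ K_t is robustly critical for every natural number t. -/
/-!  Common definitions: criticality, list coloring, DP-coloring (covers). -/

/-- `G` is `k`-critical: `χ(G) = k` and every proper subgraph has chromatic number `< k`. -/
def IsKCritical {V : Type} (G : SimpleGraph V) (k : ℕ) : Prop :=
  G.chromaticNumber = (k : ℕ∞) ∧
    ∀ G' : G.Subgraph, G' ≠ ⊤ → G'.coe.chromaticNumber < (k : ℕ∞)

/-- `G` is `k`-vertex-critical: `χ(G) = k` and every proper induced subgraph has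
chromatic number `< k`. -/
def IsKVertexCritical {V : Type} (G : SimpleGraph V) (k : ℕ) : Prop :=
  G.chromaticNumber = (k : ℕ∞) ∧
    ∀ S : Set V, S ≠ Set.univ → (G.induce S).chromaticNumber < (k : ℕ∞)

/-- `G` admits a proper `L`-coloring for the list assignment `L`. -/
def IsListColorable {V α : Type} (G : SimpleGraph V) (L : V → Finset α) : Prop :=
  ∃ f : V → α, (∀ v, f v ∈ L v) ∧ ∀ ⦃u v⦄, G.Adj u v → f u ≠ f v

/-- `G` is strongly `k`-critical: it is `k`-critical and every bad `(k-1)`-assignment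
is constant. -/
def IsStronglyKCritical {V : Type} (G : SimpleGraph V) (k : ℕ) : Prop :=
  1 ≤ k ∧ IsKCritical G k ∧
    ∀ (α : Type) (L : V → Finset α), (∀ v, (L v).card = k - 1) →
      ¬ IsListColorable G L → ∀ u v : V, L u = L v

/-- `G` is strongly `k`-chromatic-choosable: it is `k`-vertex-critical and every bad
`(k-1)`-assignment is constant. -/
def IsStronglyKChromaticChoosable {V : Type} (G : SimpleGraph V) (k : ℕ) : Prop :=
  1 ≤ k ∧ IsKVertexCritical G k ∧
    ∀ (α : Type) (L : V → Finset α), (∀ v, (L v).card = k - 1) →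
      ¬ IsListColorable G L → ∀ u v : V, L u = L v

/-- A cover `ℋ = (L, H)` of a graph `G`, with colors drawn from the type `α`
(the vertex set of `H` is all of `α`). -/
structure Cover {V : Type} (G : SimpleGraph V) (α : Type) where
  /-- The graph on the colors. -/
  H : SimpleGraph α
  /-- The lists. -/
  L : V → Finset α
  /-- The lists are pairwise disjoint. -/
  disj : ∀ ⦃u v : V⦄, u ≠ v → Disjoint (L u) (L v)
  /-- Each list is independent in `H`. -/
  indep : ∀ v : V, ∀ c ∈ L v, ∀ c' ∈ L v, ¬ H.Adj c c'
  /-- The lists cover all colors: `V(H) = ⋃ v, L v`. -/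
  covers : ∀ c : α, ∃ v : V, c ∈ L v
  /-- Edges of `H` between two lists only occur above edges of `G`. -/
  adj_support : ∀ ⦃u v : V⦄ ⦃c c' : α⦄, c ∈ L u → c' ∈ L v → H.Adj c c' → G.Adj u v
  /-- The edges of `H` between two lists form a matching. -/
  matching : ∀ ⦃u v : V⦄ ⦃c c₁ c₂ : α⦄, c ∈ L u → c₁ ∈ L v → c₂ ∈ L v →
      H.Adj c c₁ → H.Adj c c₂ → c₁ = c₂

/-- `G` is `𝒞`-colorable: `𝒞` has an independent transversal. -/
def Cover.Colorable {V α : Type} {G : SimpleGraph V} (𝒞 : Cover G α) : Prop :=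
  ∃ T : V → α, (∀ v, T v ∈ 𝒞.L v) ∧ ∀ u v : V, ¬ 𝒞.H.Adj (T u) (T v)

/-- `𝒞` is a `k`-fold cover. -/
def Cover.IsKFold {V α : Type} {G : SimpleGraph V} (𝒞 : Cover G α) (k : ℕ) : Prop :=
  ∀ v : V, (𝒞.L v).card = k

/-- `𝒞` is a canonical `k`-fold cover: it admits a canonical labeling. -/
def Cover.Canonical {V α : Type} {G : SimpleGraph V} (𝒞 : Cover G α) (k : ℕ) : Prop :=
  ∃ lam : α → Fin k,
    (∀ v : V, Set.BijOn lam (𝒞.L v : Set α) Set.univ) ∧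
    ∀ ⦃u v : V⦄, G.Adj u v → ∀ c ∈ 𝒞.L u, ∀ c' ∈ 𝒞.L v,
      (𝒞.H.Adj c c' ↔ lam c = lam c')

/-- `𝒞` is full: the matching above each edge of `G` is perfect. -/
def Cover.Full {V α : Type} {G : SimpleGraph V} (𝒞 : Cover G α) : Prop :=
  ∀ ⦃u v : V⦄, G.Adj u v → ∀ c ∈ 𝒞.L u, ∃ c' ∈ 𝒞.L v, 𝒞.H.Adj c c'

/-- `G` is robustly `k`-critical: it is `k`-critical and every bad `(k-1)`-fold cover
is canonical. -/
def IsRobustlyKCritical {V : Type} (G : SimpleGraph V) (k : ℕ) : Prop :=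
  1 ≤ k ∧ IsKCritical G k ∧
    ∀ (α : Type) (𝒞 : Cover G α), 𝒞.IsKFold (k - 1) → ¬ 𝒞.Colorable →
      𝒞.Canonical (k - 1)

/-- The join `G ∨ K_t` of `G` with a complete graph on `t` vertices. -/
def joinKt {V : Type} (G : SimpleGraph V) (t : ℕ) : SimpleGraph (V ⊕ Fin t) where
  Adj x y :=
    match x, y with
    | Sum.inl u, Sum.inl v => G.Adj u v
    | Sum.inl _, Sum.inr _ => True
    | Sum.inr _, Sum.inl _ => True
    | Sum.inr i, Sum.inr j => i ≠ j
  symm := ⟨by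
    rintro (u | i) (v | j) h
    · exact G.adj_symm h
    · trivial
    · trivial
    · exact Ne.symm h⟩
  loopless := ⟨by
    rintro (u | i) h
    · exact G.irrefl h
    · exact h rfl⟩
/-! ### Auxiliary lemmas -/

open scoped Classical

open Sum SimpleGraph

section Basic

variable {W : Type} {G : SimpleGraph W} {k : ℕ}

lemma RC_joinKt_adj_inl_inl {V : Type} {G : SimpleGraph V} {t : ℕ} {u v : V} :
    (joinKt G t).Adj (Sum.inl u) (Sum.inl v) ↔ G.Adj u v := Iff.rfl

lemma RC_joinKt_adj_inl_inr {V : Type} {G : SimpleGraph V} {t : ℕ} {u : V} {i : Fin t} :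
    (joinKt G t).Adj (Sum.inl u) (Sum.inr i) := trivial

lemma RC_joinKt_adj_inr_inl {V : Type} {G : SimpleGraph V} {t : ℕ} {u : V} {i : Fin t} :
    (joinKt G t).Adj (Sum.inr i) (Sum.inl u) := trivial

lemma RC_joinKt_adj_inr_inr {V : Type} {G : SimpleGraph V} {t : ℕ} {i j : Fin t} :
    (joinKt G t).Adj (Sum.inr i) (Sum.inr j) ↔ i ≠ j := Iff.rfl

lemma RC_colorable_of_chrom_lt (hk : 1 ≤ k)
    (h : G.chromaticNumber < (k : ℕ∞)) : G.Colorable (k - 1) := by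
  have hne : G.chromaticNumber ≠ ⊤ := ne_top_of_lt h
  have hcol := SimpleGraph.colorable_of_chromaticNumber_ne_top hne
  have heq : ((G.chromaticNumber.toNat : ℕ) : ℕ∞) = G.chromaticNumber := ENat.coe_toNat hne
  rw [← heq] at h
  have : G.chromaticNumber.toNat < k := by exact_mod_cast h
  exact hcol.mono (by omega)

lemma RC_colorable_k (h : IsKCritical G k) : G.Colorable k :=
  SimpleGraph.chromaticNumber_le_iff_colorable.mp h.1.le

lemma RC_not_colorable (h : IsKCritical G k) {n : ℕ} (hn : n < k) : ¬ G.Colorable n := by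
  intro hc
  have h1 := hc.chromaticNumber_le
  rw [h.1] at h1
  exact absurd (by exact_mod_cast h1) (by omega)

lemma RC_nonempty (h : IsKCritical G k) (hk : 1 ≤ k) : Nonempty W := by
  by_contra hne
  have : IsEmpty W := not_nonempty_iff.mp hne
  have h0 := G.chromaticNumber_eq_zero_of_isEmpty
  rw [h.1] at h0
  exact absurd (by exact_mod_cast h0) (by omega)

/-- The subgraph of `G` obtained by deleting the vertex `v₀`. -/
def RC_delVert (G : SimpleGraph W) (v₀ : W) : G.Subgraph where
  verts := {v | v ≠ v₀}
  Adj u v := u ≠ v₀ ∧ v ≠ v₀ ∧ G.Adj u v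
  adj_sub h := h.2.2
  edge_vert h := h.1
  symm := ⟨fun u v h => ⟨h.2.1, h.1, h.2.2.symm⟩⟩

lemma RC_delVert_ne_top (G : SimpleGraph W) (v₀ : W) : RC_delVert G v₀ ≠ ⊤ := by
  intro h
  have h2 := congrArg SimpleGraph.Subgraph.verts h
  rw [SimpleGraph.Subgraph.verts_top] at h2
  have : v₀ ∈ (RC_delVert G v₀).verts := h2 ▸ Set.mem_univ v₀
  exact this rfl

lemma RC_del_coloring (h : IsKCritical G k) (hk : 1 ≤ k) (v₀ : W) :
    ∃ f : {v : W // v ≠ v₀} → Fin (k - 1), ∀ a b, G.Adj a.1 b.1 → f a ≠ f b := by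
  have hlt := h.2 (RC_delVert G v₀) (RC_delVert_ne_top G v₀)
  obtain ⟨C⟩ := RC_colorable_of_chrom_lt hk hlt
  refine ⟨fun a => C ⟨a.1, a.2⟩, fun a b hab => ?_⟩
  exact C.valid (show (RC_delVert G v₀).Adj a.1 b.1 from ⟨a.2, b.2, hab⟩)

lemma RC_pointed_coloring (h : IsKCritical G k) (hk : 1 ≤ k) (v₀ : W) :
    ∃ f : W → Fin k, (∀ u v, G.Adj u v → f u ≠ f v) ∧ (∀ v, f v = f v₀ → v = v₀) := by
  obtain ⟨g, hg⟩ := RC_del_coloring h hk v₀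
  have hk1 : k - 1 < k := by omega
  refine ⟨fun v => if hv : v = v₀ then ⟨k-1, hk1⟩ else ⟨(g ⟨v, hv⟩).1, lt_trans (g ⟨v,hv⟩).2 hk1⟩,
    ?_, ?_⟩
  · intro u v huv heq
    by_cases hu : u = v₀ <;> by_cases hv : v = v₀
    · exact G.loopless.irrefl v₀ (by rw [hu, hv] at huv; exact huv)
    · simp only [hu, dif_pos, dif_neg hv] at heq
      have := (g ⟨v, hv⟩).2
      rw [Fin.ext_iff] at heq
      simp at heq
      omega
    · simp only [hv, dif_pos, dif_neg hu] at heq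
      have := (g ⟨u, hu⟩).2
      rw [Fin.ext_iff] at heq
      simp at heq
      omega
    · simp only [dif_neg hu, dif_neg hv] at heq
      rw [Fin.ext_iff] at heq
      exact hg ⟨u, hu⟩ ⟨v, hv⟩ huv (Fin.ext heq)
  · intro v hv
    by_contra hne
    simp only [dif_neg hne, dif_pos] at hv
    rw [Fin.ext_iff] at hv
    have := (g ⟨v, hne⟩).2
    simp at hv
    omega

/-- The subgraph of `G` obtained by deleting the edge `u₀v₀`. -/
def RC_delEdge (G : SimpleGraph W) (u₀ v₀ : W) : G.Subgraph where
  verts := Set.univ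
  Adj u v := G.Adj u v ∧ ¬(u = u₀ ∧ v = v₀) ∧ ¬(u = v₀ ∧ v = u₀)
  adj_sub h := h.1
  edge_vert _ := Set.mem_univ _
  symm := ⟨fun u v h => ⟨h.1.symm, fun hc => h.2.2 ⟨hc.2, hc.1⟩, fun hc => h.2.1 ⟨hc.2, hc.1⟩⟩⟩

lemma RC_delEdge_ne_top {u₀ v₀ : W} (h : G.Adj u₀ v₀) : RC_delEdge G u₀ v₀ ≠ ⊤ := by
  intro he
  have : (RC_delEdge G u₀ v₀).Adj u₀ v₀ := by
    rw [he]; exact SimpleGraph.Subgraph.top_adj.mpr h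
  exact this.2.1 ⟨rfl, rfl⟩

lemma RC_delEdge_coloring (h : IsKCritical G k) (hk : 1 ≤ k)
    {u₀ v₀ : W} (he : G.Adj u₀ v₀) :
    ∃ f : W → Fin (k-1), ∀ u v, G.Adj u v → ¬(u = u₀ ∧ v = v₀) → ¬(u = v₀ ∧ v = u₀) →
      f u ≠ f v := by
  have hlt := h.2 (RC_delEdge G u₀ v₀) (RC_delEdge_ne_top he)
  obtain ⟨C⟩ := RC_colorable_of_chrom_lt hk hlt
  refine ⟨fun v => C ⟨v, Set.mem_univ v⟩, fun u v huv h1 h2 => ?_⟩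
  exact C.valid (show (RC_delEdge G u₀ v₀).Adj u v from ⟨huv, h1, h2⟩)

lemma RC_exists_nbr (h : IsKCritical G k) (hk : 2 ≤ k) (v₀ : W) :
    ∃ u, G.Adj v₀ u := by
  by_contra hno
  push_neg at hno
  obtain ⟨g, hg⟩ := RC_del_coloring h (by omega) v₀
  have : G.Colorable (k-1) := by
    refine ⟨SimpleGraph.Coloring.mk
      (fun v => if hv : v = v₀ then ⟨0, by omega⟩ else g ⟨v, hv⟩) ?_⟩
    intro u v huv
    by_cases hu : u = v₀
    · exact ((hno v) (by rw [hu] at huv; exact huv)).elim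
    · by_cases hv : v = v₀
      · exact ((hno u) (by rw [hv] at huv; exact huv.symm)).elim
      · simp only [dif_neg hu, dif_neg hv]
        exact hg ⟨u, hu⟩ ⟨v, hv⟩ huv
  exact RC_not_colorable h (by omega) this

lemma RC_subsingleton (h : IsKCritical G 1) :
    (∀ u v : W, u = v) ∧ (∀ u v : W, ¬ G.Adj u v) := by
  have hcol : G.Colorable 1 := RC_colorable_k h
  obtain ⟨C⟩ := hcol
  have hedge : ∀ u v : W, ¬ G.Adj u v := by
    intro u v huv
    exact C.valid huv (Subsingleton.elim _ _)
  refine ⟨?_, hedge⟩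
  intro u v
  by_contra hne
  have hlt := h.2 (RC_delVert G v) (RC_delVert_ne_top G v)
  have hcol0 : (RC_delVert G v).coe.Colorable 0 := RC_colorable_of_chrom_lt le_rfl hlt
  have hempty := SimpleGraph.isEmpty_of_colorable_zero hcol0
  exact hempty.false (⟨u, hne⟩ : (RC_delVert G v).verts)

end Basic
section JoinCritical

variable {V : Type} {G : SimpleGraph V} {k : ℕ}

lemma RC_card_ne {t : ℕ} (i₀ : Fin t) :
    Fintype.card {j : Fin t // j ≠ i₀} = t - 1 := by
  have h := Fintype.card_subtype_compl (fun j : Fin t => j = i₀)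
  simp only [Fintype.card_subtype_eq, Fintype.card_fin] at h
  exact h

lemma RC_join_colorable (h : IsKCritical G k) (t : ℕ) :
    (joinKt G t).Colorable (k + t) := by
  obtain ⟨g⟩ := RC_colorable_k h
  have C : (joinKt G t).Coloring (Fin k ⊕ Fin t) :=
    SimpleGraph.Coloring.mk
      (fun x => match x with | Sum.inl v => Sum.inl (g v) | Sum.inr i => Sum.inr i)
      (by
        rintro (u|i) (v|j) hadj
        · simpa using g.valid (RC_joinKt_adj_inl_inl.mp hadj)
        · simp
        · simp
        · simpa using RC_joinKt_adj_inr_inr.mp hadj)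
  have hcc := C.colorable
  simpa [Fintype.card_sum] using hcc

lemma RC_join_chrom_lower (h : IsKCritical G k) (t : ℕ) {n : ℕ}
    (hcol : (joinKt G t).Colorable n) : k + t ≤ n := by
  obtain ⟨C⟩ := hcol
  have hinj : Function.Injective (fun i : Fin t => C (Sum.inr i)) := by
    intro i j hij
    by_contra hne
    exact C.valid (RC_joinKt_adj_inr_inr.mpr hne) hij
  set S : Finset (Fin n) := Finset.image (fun i => C (Sum.inr i)) Finset.univ with hS
  have hcardS : S.card = t := by
    rw [hS, Finset.card_image_of_injective _ hinj, Finset.card_univ, Fintype.card_fin]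
  have hmem : ∀ v : V, C (Sum.inl v) ∈ Sᶜ := by
    intro v
    rw [Finset.mem_compl]
    intro hmem
    rw [hS, Finset.mem_image] at hmem
    obtain ⟨i, _, hi⟩ := hmem
    exact C.valid (RC_joinKt_adj_inr_inl (i := i)) hi
  have hgcol : G.Colorable (n - t) := by
    have C' : G.Coloring ↥(Sᶜ : Finset (Fin n)) :=
      SimpleGraph.Coloring.mk (fun v => ⟨C (Sum.inl v), hmem v⟩)
        (by
          intro u v huv heq
          exact C.valid (RC_joinKt_adj_inl_inl.mpr huv) (by simpa using heq))
    have hcc := C'.colorable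
    rwa [Fintype.card_coe, Finset.card_compl, Fintype.card_fin, hcardS] at hcc
  have h1 : k ≤ n - t := by
    have hle := hgcol.chromaticNumber_le
    rw [h.1] at hle
    exact_mod_cast hle
  have h2 : t ≤ n := by
    have hle := Finset.card_le_univ S
    rwa [hcardS, Fintype.card_fin] at hle
  omega

lemma RC_join_critical (hk : 1 ≤ k) (h : IsKCritical G k) (t : ℕ) :
    IsKCritical (joinKt G t) (k + t) := by
  have hcol := RC_join_colorable h t
  constructor
  · refine le_antisymm hcol.chromaticNumber_le ?_
    by_contra hlt
    push_neg at hlt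
    have hc1 := RC_colorable_of_chrom_lt (by omega) hlt
    have := RC_join_chrom_lower h t hc1
    omega
  · intro G'' hne
    suffices hcc : G''.coe.Colorable (k + t - 1) by
      have h1 := hcc.chromaticNumber_le
      have h2 : ((k + t - 1 : ℕ) : ℕ∞) < ((k + t : ℕ) : ℕ∞) := by
        exact_mod_cast (by omega : k + t - 1 < k + t)
      exact lt_of_le_of_lt h1 h2
    have key : ∀ (β : Type) (_ : Fintype β) (f : (V ⊕ Fin t) → β),
        (∀ x y, G''.Adj x y → f x ≠ f y) → Fintype.card β = k + t - 1 →
        G''.coe.Colorable (k + t - 1) := by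
      intro β hβ f hf hcard
      have C : G''.coe.Coloring β :=
        SimpleGraph.Coloring.mk (fun x => f x.1)
          (fun {a b} hab => hf a.1 b.1 (by exact hab))
      have hcc := C.colorable
      rwa [hcard] at hcc
    by_cases hdeg : k + t = 1
    · have hk1 : k = 1 := by omega
      have ht0 : t = 0 := by omega
      subst ht0
      obtain ⟨hsing, hedgeless⟩ := RC_subsingleton (hk1 ▸ h)
      have hjedge : ∀ x y : V ⊕ Fin 0, ¬ (joinKt G 0).Adj x y := by
        rintro (u|i) (v|j) hxy
        · exact hedgeless u v hxy
        · exact j.elim0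
        · exact i.elim0
        · exact i.elim0
      have hss : ∀ a b : V ⊕ Fin 0, a = b := by
        rintro (a|i) (b|j)
        · exact congrArg Sum.inl (hsing a b)
        · exact j.elim0
        · exact i.elim0
        · exact i.elim0
      have hvempty : IsEmpty G''.verts := by
        constructor
        rintro ⟨x, hx⟩
        apply hne
        refine SimpleGraph.Subgraph.ext ?_ ?_
        · rw [SimpleGraph.Subgraph.verts_top]
          exact Set.eq_univ_of_forall (fun y => hss y x ▸ hx)
        · funext a b
          apply propext
          rw [SimpleGraph.Subgraph.top_adj]
          exact ⟨fun ha => absurd (G''.adj_sub ha) (hjedge a b),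
            fun ha => absurd ha (hjedge a b)⟩
      haveI := hvempty
      exact SimpleGraph.Colorable.of_isEmpty _
    -- main branch : k + t ≥ 2
    have hkt2 : 2 ≤ k + t := by omega
    have hdecomp : (∃ x, x ∉ G''.verts) ∨
        (∃ x y, (joinKt G t).Adj x y ∧ ¬ G''.Adj x y) := by
      by_contra hcon
      push_neg at hcon
      obtain ⟨h1, h2⟩ := hcon
      apply hne
      refine SimpleGraph.Subgraph.ext ?_ ?_
      · rw [SimpleGraph.Subgraph.verts_top]
        exact Set.eq_univ_of_forall h1
      · funext x y
        apply propext
        rw [SimpleGraph.Subgraph.top_adj]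
        exact ⟨fun ha => G''.adj_sub ha, fun ha => h2 x y ha⟩
    have hmissW : ∀ i₀ : Fin t, Sum.inr i₀ ∉ G''.verts → G''.coe.Colorable (k+t-1) := by
      intro i₀ hi₀
      obtain ⟨g⟩ := RC_colorable_k h
      refine key (Fin k ⊕ {j : Fin t // j ≠ i₀}) inferInstance
        (fun x => match x with
          | Sum.inl v => Sum.inl (g v)
          | Sum.inr j => if hj : j = i₀ then Sum.inl ⟨0, by omega⟩ else Sum.inr ⟨j, hj⟩)
        ?_ ?_
      · rintro (u|i) (v|j) hadj
        · simpa using g.valid (G''.adj_sub hadj)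
        · have hj : j ≠ i₀ := fun hj => hi₀ (hj ▸ hadj.snd_mem)
          simp [hj]
        · have hi : i ≠ i₀ := fun hi => hi₀ (hi ▸ hadj.fst_mem)
          simp [hi]
        · have hi : i ≠ i₀ := fun hi => hi₀ (hi ▸ hadj.fst_mem)
          have hj : j ≠ i₀ := fun hj => hi₀ (hj ▸ hadj.snd_mem)
          have hij : i ≠ j := G''.adj_sub hadj
          simp [hi, hj, hij]
      · have ht1 : t ≠ 0 := fun h0 => (h0 ▸ i₀).elim0
        rw [Fintype.card_sum, Fintype.card_fin, RC_card_ne i₀]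
        omega
    have hmissG : ∀ v₀ : V, Sum.inl v₀ ∉ G''.verts → G''.coe.Colorable (k+t-1) := by
      intro v₀ hv₀
      obtain ⟨g, hg⟩ := RC_del_coloring h hk v₀
      have hne2 : Nonempty (Fin (k-1) ⊕ Fin t) := by
        rw [← Fintype.card_pos_iff, Fintype.card_sum, Fintype.card_fin, Fintype.card_fin]
        omega
      obtain ⟨junk⟩ := hne2
      refine key (Fin (k-1) ⊕ Fin t) inferInstance
        (fun x => match x with
          | Sum.inl v => if hv : v = v₀ then junk else Sum.inl (g ⟨v, hv⟩)
          | Sum.inr j => Sum.inr j) ?_ ?_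
      · rintro (u|i) (v|j) hadj
        · have hu : u ≠ v₀ := fun he => hv₀ (he ▸ hadj.fst_mem)
          have hv : v ≠ v₀ := fun he => hv₀ (he ▸ hadj.snd_mem)
          simp only [dif_neg hu, dif_neg hv]
          simpa using hg ⟨u,hu⟩ ⟨v,hv⟩ (G''.adj_sub hadj)
        · have hu : u ≠ v₀ := fun he => hv₀ (he ▸ hadj.fst_mem)
          simp [dif_neg hu]
        · have hv : v ≠ v₀ := fun he => hv₀ (he ▸ hadj.snd_mem)
          simp [dif_neg hv]
        · have hij : i ≠ j := G''.adj_sub hadj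
          simp [hij]
      · rw [Fintype.card_sum, Fintype.card_fin, Fintype.card_fin]
        omega
    have hmissEGG : ∀ u₀ v₀ : V, G.Adj u₀ v₀ → ¬ G''.Adj (Sum.inl u₀) (Sum.inl v₀) →
        G''.coe.Colorable (k+t-1) := by
      intro u₀ v₀ he hnadj
      obtain ⟨f, hf⟩ := RC_delEdge_coloring h hk he
      refine key (Fin (k-1) ⊕ Fin t) inferInstance
        (fun x => match x with
          | Sum.inl v => Sum.inl (f v)
          | Sum.inr j => Sum.inr j) ?_ ?_
      · rintro (u|i) (v|j) hadj
        · have hG : G.Adj u v := G''.adj_sub hadj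
          have h1 : ¬(u = u₀ ∧ v = v₀) := by rintro ⟨rfl, rfl⟩; exact hnadj hadj
          have h2 : ¬(u = v₀ ∧ v = u₀) := by rintro ⟨rfl, rfl⟩; exact hnadj (G''.adj_symm hadj)
          simpa using hf u v hG h1 h2
        · simp
        · simp
        · have hij : i ≠ j := G''.adj_sub hadj
          simp [hij]
      · rw [Fintype.card_sum, Fintype.card_fin, Fintype.card_fin]
        omega
    have hmissCross : ∀ (u₀ : V) (i₀ : Fin t), ¬ G''.Adj (Sum.inl u₀) (Sum.inr i₀) →
        G''.coe.Colorable (k+t-1) := by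
      intro u₀ i₀ hnadj
      obtain ⟨g, hg⟩ := RC_del_coloring h hk u₀
      refine key (Option (Fin (k-1)) ⊕ {j : Fin t // j ≠ i₀}) inferInstance
        (fun x => match x with
          | Sum.inl v => Sum.inl (if hv : v = u₀ then none else some (g ⟨v, hv⟩))
          | Sum.inr j => if hj : j = i₀ then Sum.inl none else Sum.inr ⟨j, hj⟩) ?_ ?_
      · rintro (u|i) (v|j) hadj
        · have hG : G.Adj u v := G''.adj_sub hadj
          by_cases hu : u = u₀ <;> by_cases hv : v = u₀
          · subst hu; subst hv; exact absurd hG (G.loopless.irrefl _)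
          · simp [hu, hv]
          · simp [hu, hv]
          · simp only [dif_neg hu, dif_neg hv]
            simpa using hg ⟨u,hu⟩ ⟨v,hv⟩ hG
        · by_cases hj : j = i₀
          · subst hj
            by_cases hu : u = u₀
            · subst hu; exact absurd hadj hnadj
            · simp [hu]
          · simp [hj]
        · by_cases hi : i = i₀
          · subst hi
            by_cases hv : v = u₀
            · subst hv; exact absurd (G''.adj_symm hadj) hnadj
            · simp [hv]
          · simp [hi]
        · by_cases hi : i = i₀ <;> by_cases hj : j = i₀
          · subst hi; subst hj; exact absurd (G''.adj_sub hadj) (by simp)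
          · simp [hi, hj]
          · simp [hi, hj]
          · have hij : i ≠ j := G''.adj_sub hadj
            simp [hi, hj, hij]
      · rw [Fintype.card_sum, Fintype.card_option, Fintype.card_fin, RC_card_ne i₀]
        have ht1 : t ≠ 0 := fun h0 => (h0 ▸ i₀).elim0
        omega
    have hmissK : ∀ (i₀ j₀ : Fin t), i₀ ≠ j₀ → ¬ G''.Adj (Sum.inr i₀) (Sum.inr j₀) →
        G''.coe.Colorable (k+t-1) := by
      intro i₀ j₀ hne0 hnadj
      obtain ⟨g⟩ := RC_colorable_k h
      refine key (Fin k ⊕ {j : Fin t // j ≠ i₀}) inferInstance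
        (fun x => match x with
          | Sum.inl v => Sum.inl (g v)
          | Sum.inr j => if hj : j = i₀ then Sum.inr ⟨j₀, Ne.symm hne0⟩
              else Sum.inr ⟨j, hj⟩) ?_ ?_
      · rintro (u|i) (v|j) hadj
        · simpa using g.valid (G''.adj_sub hadj)
        · by_cases hj : j = i₀ <;> simp [hj]
        · by_cases hi : i = i₀ <;> simp [hi]
        · by_cases hi : i = i₀ <;> by_cases hj : j = i₀
          · subst hi; subst hj; exact absurd (G''.adj_sub hadj) (by simp)
          · subst hi
            by_cases hj0 : j = j₀
            · subst hj0; exact absurd hadj hnadj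
            · simp [hj, Ne.symm hj0]
          · subst hj
            by_cases hi0 : i = j₀
            · subst hi0; exact absurd (G''.adj_symm hadj) hnadj
            · simp [hi, hi0]
          · have hij : i ≠ j := G''.adj_sub hadj
            simp [hi, hj, hij]
      · rw [Fintype.card_sum, Fintype.card_fin, RC_card_ne i₀]
        have ht1 : t ≠ 0 := fun h0 => (h0 ▸ i₀).elim0
        omega
    rcases hdecomp with ⟨x₀, hx₀⟩ | ⟨x, y, hadj, hnadj⟩
    · cases x₀ with
      | inl v₀ => exact hmissG v₀ hx₀
      | inr i₀ => exact hmissW i₀ hx₀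
    · cases x with
      | inl u₀ =>
        cases y with
        | inl v₀ => exact hmissEGG u₀ v₀ hadj hnadj
        | inr i₀ => exact hmissCross u₀ i₀ hnadj
      | inr i₀ =>
        cases y with
        | inl u₀ => exact hmissCross u₀ i₀ (fun ha => hnadj (G''.adj_symm ha))
        | inr j₀ => exact hmissK i₀ j₀ hadj hnadj

end JoinCritical
section Covers

variable {V : Type} {G : SimpleGraph V} {k t : ℕ} {α : Type}

lemma RC_nbr_card (ℋ : Cover (joinKt G t) α) {x y : V ⊕ Fin t} {c : α} (hc : c ∈ ℋ.L x) :
    ((ℋ.L y).filter (fun d => ℋ.H.Adj c d)).card ≤ 1 := by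
  rw [Finset.card_le_one]
  intro a ha b hb
  rw [Finset.mem_filter] at ha hb
  exact ℋ.matching hc ha.1 hb.1 ha.2 hb.2

lemma RC_greedy (ℋ : Cover (joinKt G t) α) (hfold : ℋ.IsKFold (k + t - 1)) (hk : 1 ≤ k)
    (avoid : Fin t → Finset α) (hav : ∀ i, (avoid i).card + t ≤ k + t - 1)
    (s : Finset (Fin t)) (σ₀ : Fin t → α)
    (hmem : ∀ i ∈ s, σ₀ i ∈ ℋ.L (Sum.inr i) ∧ σ₀ i ∉ avoid i)
    (hind : ∀ i ∈ s, ∀ j ∈ s, i ≠ j → ¬ ℋ.H.Adj (σ₀ i) (σ₀ j)) :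
    ∃ σ : Fin t → α, (∀ i ∈ s, σ i = σ₀ i) ∧
      (∀ i, σ i ∈ ℋ.L (Sum.inr i) ∧ σ i ∉ avoid i) ∧
      (∀ i j, i ≠ j → ¬ ℋ.H.Adj (σ i) (σ j)) := by
  have key : ∀ (n : ℕ) (s : Finset (Fin t)) (σ₀ : Fin t → α),
      t - s.card ≤ n →
      (∀ i ∈ s, σ₀ i ∈ ℋ.L (Sum.inr i) ∧ σ₀ i ∉ avoid i) →
      (∀ i ∈ s, ∀ j ∈ s, i ≠ j → ¬ ℋ.H.Adj (σ₀ i) (σ₀ j)) →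
      ∃ σ : Fin t → α, (∀ i ∈ s, σ i = σ₀ i) ∧
        (∀ i, σ i ∈ ℋ.L (Sum.inr i) ∧ σ i ∉ avoid i) ∧
        (∀ i j, i ≠ j → ¬ ℋ.H.Adj (σ i) (σ j)) := by
    intro n
    induction n with
    | zero =>
      intro s σ₀ hn hmem hind
      have hs : s = Finset.univ := by
        apply Finset.eq_univ_of_card
        have h1 := Finset.card_le_univ s
        rw [Fintype.card_fin] at h1
        rw [Fintype.card_fin]
        omega
      subst hs
      exact ⟨σ₀, fun i _ => rfl, fun i => hmem i (Finset.mem_univ i),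
        fun i j hij => hind i (Finset.mem_univ i) j (Finset.mem_univ j) hij⟩
    | succ n ih =>
      intro s σ₀ hn hmem hind
      by_cases hs : s = Finset.univ
      · subst hs
        exact ⟨σ₀, fun i _ => rfl, fun i => hmem i (Finset.mem_univ i),
          fun i j hij => hind i (Finset.mem_univ i) j (Finset.mem_univ j) hij⟩
      · obtain ⟨i₀, hi₀⟩ : ∃ i₀, i₀ ∉ s := by
          by_contra hno; push_neg at hno
          exact hs (Finset.eq_univ_of_forall hno)
        have hbadcard : (s.biUnion (fun j => (ℋ.L (Sum.inr i₀)).filter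
            (fun d => ℋ.H.Adj (σ₀ j) d))).card ≤ s.card := by
          refine le_trans Finset.card_biUnion_le ?_
          refine le_trans (Finset.sum_le_card_nsmul s _ 1 ?_) (by simp)
          intro j hj
          exact RC_nbr_card ℋ (hmem j hj).1
        have hscard : s.card < t := by
          have h1 := Finset.card_le_univ s
          rw [Fintype.card_fin] at h1
          rcases Nat.lt_or_ge s.card t with hlt | hge
          · exact hlt
          · exact absurd (Finset.eq_univ_of_card s (by rw [Fintype.card_fin]; omega)) hs
        have hLcard := hfold (Sum.inr i₀)
        have h1 := Finset.le_card_sdiff (avoid i₀) (ℋ.L (Sum.inr i₀))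
        have h2 := Finset.le_card_sdiff (s.biUnion (fun j => (ℋ.L (Sum.inr i₀)).filter
            (fun d => ℋ.H.Adj (σ₀ j) d))) ((ℋ.L (Sum.inr i₀)) \ avoid i₀)
        have h3 := hav i₀
        rw [hLcard] at h1
        have hCpos : 0 < (((ℋ.L (Sum.inr i₀)) \ avoid i₀) \
            (s.biUnion (fun j => (ℋ.L (Sum.inr i₀)).filter
              (fun d => ℋ.H.Adj (σ₀ j) d)))).card := by omega
        obtain ⟨c, hcC⟩ := Finset.card_pos.mp hCpos
        rw [Finset.mem_sdiff] at hcC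
        obtain ⟨hcC1, hcbad⟩ := hcC
        rw [Finset.mem_sdiff] at hcC1
        obtain ⟨hcL, hcav⟩ := hcC1
        have hcnadj : ∀ j ∈ s, ¬ ℋ.H.Adj (σ₀ j) c := by
          intro j hj hadj
          exact hcbad (Finset.mem_biUnion.mpr ⟨j, hj, Finset.mem_filter.mpr ⟨hcL, hadj⟩⟩)
        obtain ⟨σ, hσ1, hσ2, hσ3⟩ := ih (insert i₀ s) (Function.update σ₀ i₀ c)
          (by rw [Finset.card_insert_of_notMem hi₀]; omega)
          (by
            intro i hi
            rcases Finset.mem_insert.mp hi with rfl | hi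
            · rw [Function.update_self]; exact ⟨hcL, hcav⟩
            · rw [Function.update_of_ne (ne_of_mem_of_not_mem hi hi₀)]
              exact hmem i hi)
          (by
            intro i hi j hj hij
            rcases Finset.mem_insert.mp hi with rfl | hi' <;>
              rcases Finset.mem_insert.mp hj with rfl | hj'
            · exact absurd rfl hij
            · rw [Function.update_self,
                Function.update_of_ne (ne_of_mem_of_not_mem hj' hi₀)]
              exact fun hadj => hcnadj j hj' (ℋ.H.adj_symm hadj)
            · rw [Function.update_self,
                Function.update_of_ne (ne_of_mem_of_not_mem hi' hi₀)]
              exact hcnadj i hi'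
            · rw [Function.update_of_ne (ne_of_mem_of_not_mem hi' hi₀),
                Function.update_of_ne (ne_of_mem_of_not_mem hj' hi₀)]
              exact hind i hi' j hj' hij)
        refine ⟨σ, ?_, hσ2, hσ3⟩
        intro i hi
        rw [hσ1 i (Finset.mem_insert_of_mem hi),
          Function.update_of_ne (ne_of_mem_of_not_mem hi hi₀)]
  exact key t s σ₀ (by omega) hmem hind

/-- The embedding of a sublist into the subtype of all sublist colors. -/
def RC_emb (S : V → Finset α) (v : V) : {x // x ∈ S v} ↪ {c : α // ∃ v, c ∈ S v} where
  toFun c := ⟨c.1, ⟨v, c.2⟩⟩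
  inj' a b hab := by
    have h2 := congrArg Subtype.val hab
    exact Subtype.ext h2

lemma RC_mem_sub_aux {S : V → Finset α} {v : V} {x : {c : α // ∃ v, c ∈ S v}} :
    x ∈ (S v).attach.map (RC_emb S v) ↔ x.1 ∈ S v := by
  constructor
  · intro hx
    rw [Finset.mem_map] at hx
    obtain ⟨a, _, hae⟩ := hx
    rw [← hae]
    exact a.2
  · intro hx
    rw [Finset.mem_map]
    exact ⟨⟨x.1, hx⟩, Finset.mem_attach _ _, Subtype.ext rfl⟩

/-- The cover of `G` induced by restricting an `ℋ`-cover of `G ∨ K_t` to sublists `S v`. -/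
noncomputable def RC_sub (ℋ : Cover (joinKt G t) α) (S : V → Finset α)
    (hS : ∀ v, S v ⊆ ℋ.L (Sum.inl v)) : Cover G {c : α // ∃ v, c ∈ S v} where
  H := ℋ.H.comap (fun c => c.1)
  L v := (S v).attach.map (RC_emb S v)
  disj := by
    intro u v huv
    rw [Finset.disjoint_left]
    intro x hxu hxv
    rw [RC_mem_sub_aux] at hxu hxv
    exact Finset.disjoint_left.mp
      (ℋ.disj (fun he => huv (Sum.inl.inj he))) (hS u hxu) (hS v hxv)
  indep := by
    intro v c hc c' hc' hadj
    rw [RC_mem_sub_aux] at hc hc'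
    exact ℋ.indep (Sum.inl v) c.1 (hS v hc) c'.1 (hS v hc') hadj
  covers := by
    rintro ⟨x, v, hv⟩
    exact ⟨v, RC_mem_sub_aux.mpr hv⟩
  adj_support := by
    intro u v c c' hc hc' hadj
    rw [RC_mem_sub_aux] at hc hc'
    exact RC_joinKt_adj_inl_inl.mp (ℋ.adj_support (hS u hc) (hS v hc') hadj)
  matching := by
    intro u v c c₁ c₂ hc hc₁ hc₂ h1 h2
    rw [RC_mem_sub_aux] at hc hc₁ hc₂
    exact Subtype.ext (ℋ.matching (hS u hc) (hS v hc₁) (hS v hc₂) h1 h2)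

lemma RC_mem_sub {ℋ : Cover (joinKt G t) α} {S : V → Finset α}
    {hS : ∀ v, S v ⊆ ℋ.L (Sum.inl v)} {v : V} {x} :
    x ∈ (RC_sub ℋ S hS).L v ↔ x.1 ∈ S v := RC_mem_sub_aux

lemma RC_sub_adj {ℋ : Cover (joinKt G t) α} {S : V → Finset α}
    {hS : ∀ v, S v ⊆ ℋ.L (Sum.inl v)} {a b : {c : α // ∃ v, c ∈ S v}} :
    (RC_sub ℋ S hS).H.Adj a b ↔ ℋ.H.Adj a.1 b.1 := Iff.rfl

lemma RC_sub_kfold {ℋ : Cover (joinKt G t) α} {S : V → Finset α}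
    {hS : ∀ v, S v ⊆ ℋ.L (Sum.inl v)} (hcard : ∀ v, (S v).card = k - 1) :
    (RC_sub ℋ S hS).IsKFold (k - 1) := by
  intro v
  show ((S v).attach.map (RC_emb S v)).card = k - 1
  rw [Finset.card_map, Finset.card_attach]
  exact hcard v

lemma RC_canonical_full {W β : Type} {G' : SimpleGraph W} {𝒞 : Cover G' β} {n : ℕ}
    (hcan : 𝒞.Canonical n) :
    ∀ ⦃u v : W⦄, G'.Adj u v → ∀ c ∈ 𝒞.L u, ∃ c' ∈ 𝒞.L v, 𝒞.H.Adj c c' := by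
  obtain ⟨lam, hbij, hiff⟩ := hcan
  intro u v huv c hc
  obtain ⟨c', hc', hlam⟩ := (hbij v).2.2 (Set.mem_univ (lam c))
  refine ⟨c', hc', ?_⟩
  exact (hiff huv c hc c' hc').mpr hlam.symm

lemma RC_restricted_full (hGrob : IsRobustlyKCritical G k)
    (ℋ : Cover (joinKt G t) α) (hbad : ¬ ℋ.Colorable)
    (σ : Fin t → α) (hσ1 : ∀ i, σ i ∈ ℋ.L (Sum.inr i))
    (hσ2 : ∀ i j, i ≠ j → ¬ ℋ.H.Adj (σ i) (σ j))
    (S : V → Finset α) (hS : ∀ v, S v ⊆ ℋ.L (Sum.inl v)) (hcard : ∀ v, (S v).card = k - 1)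
    (havoid : ∀ v, ∀ c ∈ S v, ∀ i, ¬ ℋ.H.Adj (σ i) c) :
    ∀ ⦃u v : V⦄, G.Adj u v → ∀ c ∈ S u, ∃ c' ∈ S v, ℋ.H.Adj c c' := by
  have hsubbad : ¬ (RC_sub ℋ S hS).Colorable := by
    rintro ⟨T, hT1, hT2⟩
    apply hbad
    refine ⟨fun x => match x with | Sum.inl v => (T v).1 | Sum.inr i => σ i, ?_, ?_⟩
    · rintro (v|i)
      · exact hS v (RC_mem_sub.mp (hT1 v))
      · exact hσ1 i
    · rintro (u|i) (v|j)
      · exact fun h => hT2 u v (RC_sub_adj.mpr h)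
      · exact fun hadj => havoid u (T u).1 (RC_mem_sub.mp (hT1 u)) j (ℋ.H.adj_symm hadj)
      · exact fun hadj => havoid v (T v).1 (RC_mem_sub.mp (hT1 v)) i hadj
      · by_cases hij : i = j
        · subst hij; exact ℋ.H.loopless.irrefl (σ i)
        · exact hσ2 i j hij
  have hcan := hGrob.2.2 _ (RC_sub ℋ S hS) (RC_sub_kfold hcard) hsubbad
  intro u v huv c hc
  have hcm : (⟨c, ⟨u, hc⟩⟩ : {c : α // ∃ v, c ∈ S v}) ∈ (RC_sub ℋ S hS).L u :=
    RC_mem_sub.mpr hc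
  obtain ⟨c', hc', hadj⟩ := RC_canonical_full hcan huv _ hcm
  exact ⟨c'.1, RC_mem_sub.mp hc', RC_sub_adj.mp hadj⟩

/-- The trimmed list at `v` relative to a clique transversal `σ`. -/
noncomputable def RC_trim (ℋ : Cover (joinKt G t) α) (σ : Fin t → α) (v : V) : Finset α :=
  (ℋ.L (Sum.inl v)).filter (fun c => ∀ i, ¬ ℋ.H.Adj (σ i) c)

lemma RC_trim_subset {ℋ : Cover (joinKt G t) α} {σ : Fin t → α} {v : V} :
    RC_trim ℋ σ v ⊆ ℋ.L (Sum.inl v) := Finset.filter_subset _ _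

lemma RC_mem_trim {ℋ : Cover (joinKt G t) α} {σ : Fin t → α} {v : V} {c : α} :
    c ∈ RC_trim ℋ σ v ↔ c ∈ ℋ.L (Sum.inl v) ∧ ∀ i, ¬ ℋ.H.Adj (σ i) c :=
  Finset.mem_filter

lemma RC_trim_card_ge (ℋ : Cover (joinKt G t) α) (hfold : ℋ.IsKFold (k + t - 1))
    (hk : 1 ≤ k) (σ : Fin t → α) (hσ1 : ∀ i, σ i ∈ ℋ.L (Sum.inr i)) (v : V) :
    k - 1 ≤ (RC_trim ℋ σ v).card := by
  have hsub2 : (ℋ.L (Sum.inl v)) \ (Finset.univ.biUnion (fun i : Fin t =>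
      (ℋ.L (Sum.inl v)).filter (fun c => ℋ.H.Adj (σ i) c))) ⊆ RC_trim ℋ σ v := by
    intro c hc
    rw [Finset.mem_sdiff] at hc
    refine RC_mem_trim.mpr ⟨hc.1, fun i hadj => hc.2 ?_⟩
    exact Finset.mem_biUnion.mpr ⟨i, Finset.mem_univ i, Finset.mem_filter.mpr ⟨hc.1, hadj⟩⟩
  have hbig : (Finset.univ.biUnion (fun i : Fin t =>
      (ℋ.L (Sum.inl v)).filter (fun c => ℋ.H.Adj (σ i) c))).card ≤ t := by
    refine le_trans Finset.card_biUnion_le ?_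
    refine le_trans (Finset.sum_le_card_nsmul Finset.univ _ 1 ?_) (by simp)
    intro i _
    exact RC_nbr_card ℋ (hσ1 i)
  have h1 := Finset.le_card_sdiff (Finset.univ.biUnion (fun i : Fin t =>
      (ℋ.L (Sum.inl v)).filter (fun c => ℋ.H.Adj (σ i) c))) (ℋ.L (Sum.inl v))
  have h2 := Finset.card_le_card hsub2
  have hL := hfold (Sum.inl v)
  omega

end Covers
section Covers2

variable {V : Type} {G : SimpleGraph V} {k t : ℕ} {α : Type}

lemma RC_trim_card_le (hGrob : IsRobustlyKCritical G k)
    (ℋ : Cover (joinKt G t) α) (hfold : ℋ.IsKFold (k + t - 1)) (hbad : ¬ ℋ.Colorable)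
    (σ : Fin t → α) (hσ1 : ∀ i, σ i ∈ ℋ.L (Sum.inr i))
    (hσ2 : ∀ i j, i ≠ j → ¬ ℋ.H.Adj (σ i) (σ j)) (v₀ : V) :
    (RC_trim ℋ σ v₀).card ≤ k - 1 := by
  have hk := hGrob.1
  have hcrit := hGrob.2.1
  by_contra hgt
  push_neg at hgt
  by_cases hk1 : k = 1
  · subst hk1
    obtain ⟨hsing, _⟩ := RC_subsingleton hcrit
    obtain ⟨z, hz⟩ := Finset.card_pos.mp (show 0 < (RC_trim ℋ σ v₀).card by omega)
    rw [RC_mem_trim] at hz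
    apply hbad
    refine ⟨fun x => match x with | Sum.inl v => z | Sum.inr i => σ i, ?_, ?_⟩
    · rintro (v|i)
      · show z ∈ ℋ.L (Sum.inl v)
        rw [hsing v v₀]
        exact hz.1
      · exact hσ1 i
    · rintro (u|i) (v|j)
      · exact ℋ.H.loopless.irrefl z
      · exact fun h => hz.2 j (ℋ.H.adj_symm h)
      · exact hz.2 i
      · by_cases hij : i = j
        · subst hij; exact ℋ.H.loopless.irrefl (σ i)
        · exact hσ2 i j hij
  · have hk2 : 2 ≤ k := by omega
    obtain ⟨u, hu⟩ := RC_exists_nbr hcrit hk2 v₀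
    have huv : u ≠ v₀ := hu.ne'
    have hlow : ∀ v, k - 1 ≤ (RC_trim ℋ σ v).card :=
      fun v => RC_trim_card_ge ℋ hfold hk σ hσ1 v
    have hchoose : ∀ v : V, ∃ Sv, Sv ⊆ RC_trim ℋ σ v ∧ Sv.card = k - 1 :=
      fun v => Finset.exists_subset_card_eq (hlow v)
    choose S₀ hS₀sub hS₀card using hchoose
    obtain ⟨L', hL'sub, hL'card⟩ := Finset.exists_subset_card_eq
      (show k ≤ (RC_trim ℋ σ v₀).card by omega)
    have key : ∀ z ∈ L', ∀ a ∈ S₀ u, ∃ b ∈ L' \ {z}, ℋ.H.Adj a b := by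
      intro z hz a ha
      set Sz : V → Finset α := fun w => if w = v₀ then L' \ {z} else S₀ w with hSz
      have hSzv₀ : Sz v₀ = L' \ {z} := by simp [hSz]
      have hSzo : ∀ w, w ≠ v₀ → Sz w = S₀ w := fun w hw => by simp [hSz, hw]
      have hsub : ∀ w, Sz w ⊆ RC_trim ℋ σ w := by
        intro w
        by_cases hw : w = v₀
        · subst hw; rw [hSzv₀]
          exact subset_trans Finset.sdiff_subset hL'sub
        · rw [hSzo w hw]; exact hS₀sub w
      have hsub' : ∀ w, Sz w ⊆ ℋ.L (Sum.inl w) :=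
        fun w => subset_trans (hsub w) RC_trim_subset
      have hcards : ∀ w, (Sz w).card = k - 1 := by
        intro w
        by_cases hw : w = v₀
        · subst hw
          rw [hSzv₀, Finset.card_sdiff_of_subset (Finset.singleton_subset_iff.mpr hz),
            Finset.card_singleton, hL'card]
        · rw [hSzo w hw]; exact hS₀card w
      have havd : ∀ w, ∀ c ∈ Sz w, ∀ i, ¬ ℋ.H.Adj (σ i) c :=
        fun w c hc i => (RC_mem_trim.mp (hsub w hc)).2 i
      have hres := RC_restricted_full hGrob ℋ hbad σ hσ1 hσ2 Sz hsub' hcards havd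
        (G.adj_symm hu) a (by rw [hSzo u huv]; exact ha)
      obtain ⟨b, hb, hab⟩ := hres
      rw [hSzv₀] at hb
      exact ⟨b, hb, hab⟩
    obtain ⟨a, ha⟩ := Finset.card_pos.mp (show 0 < (S₀ u).card by rw [hS₀card u]; omega)
    obtain ⟨z₀, hz₀⟩ := Finset.card_pos.mp (show 0 < L'.card by rw [hL'card]; omega)
    obtain ⟨b, hb, hab⟩ := key z₀ hz₀ a ha
    have hbL' : b ∈ L' := (Finset.mem_sdiff.mp hb).1
    obtain ⟨b', hb', hab'⟩ := key b hbL' a ha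
    have haL : a ∈ ℋ.L (Sum.inl u) := RC_trim_subset (hS₀sub u ha)
    have hbL : b ∈ ℋ.L (Sum.inl v₀) := RC_trim_subset (hL'sub hbL')
    have hb'L : b' ∈ ℋ.L (Sum.inl v₀) :=
      RC_trim_subset (hL'sub (Finset.mem_sdiff.mp hb').1)
    have heq : b' = b := ℋ.matching haL hb'L hbL hab' hab
    rw [heq] at hb'
    exact (Finset.mem_sdiff.mp hb').2 (Finset.mem_singleton_self b)

lemma RC_trim_card_eq (hGrob : IsRobustlyKCritical G k)
    (ℋ : Cover (joinKt G t) α) (hfold : ℋ.IsKFold (k + t - 1)) (hbad : ¬ ℋ.Colorable)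
    (σ : Fin t → α) (hσ1 : ∀ i, σ i ∈ ℋ.L (Sum.inr i))
    (hσ2 : ∀ i j, i ≠ j → ¬ ℋ.H.Adj (σ i) (σ j)) (v : V) :
    (RC_trim ℋ σ v).card = k - 1 :=
  le_antisymm (RC_trim_card_le hGrob ℋ hfold hbad σ hσ1 hσ2 v)
    (RC_trim_card_ge ℋ hfold hGrob.1 σ hσ1 v)

lemma RC_trim_full (hGrob : IsRobustlyKCritical G k)
    (ℋ : Cover (joinKt G t) α) (hfold : ℋ.IsKFold (k + t - 1)) (hbad : ¬ ℋ.Colorable)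
    (σ : Fin t → α) (hσ1 : ∀ i, σ i ∈ ℋ.L (Sum.inr i))
    (hσ2 : ∀ i j, i ≠ j → ¬ ℋ.H.Adj (σ i) (σ j)) :
    ∀ ⦃u v : V⦄, G.Adj u v → ∀ c ∈ RC_trim ℋ σ u, ∃ c' ∈ RC_trim ℋ σ v, ℋ.H.Adj c c' :=
  RC_restricted_full hGrob ℋ hbad σ hσ1 hσ2 _ (fun _ => RC_trim_subset)
    (fun v => RC_trim_card_eq hGrob ℋ hfold hbad σ hσ1 hσ2 v)
    (fun _ c hc i => (RC_mem_trim.mp hc).2 i)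

lemma RC_sigma_distinct (hGrob : IsRobustlyKCritical G k)
    (ℋ : Cover (joinKt G t) α) (hfold : ℋ.IsKFold (k + t - 1)) (hbad : ¬ ℋ.Colorable)
    (σ : Fin t → α) (hσ1 : ∀ i, σ i ∈ ℋ.L (Sum.inr i))
    (hσ2 : ∀ i j, i ≠ j → ¬ ℋ.H.Adj (σ i) (σ j)) {v : V} {x : α}
    (hx : x ∈ ℋ.L (Sum.inl v)) {i j : Fin t} (hij : i ≠ j)
    (hix : ℋ.H.Adj (σ i) x) (hjx : ℋ.H.Adj (σ j) x) : False := by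
  have htrim := RC_trim_card_le hGrob ℋ hfold hbad σ hσ1 hσ2 v
  have hL := hfold (Sum.inl v)
  have hsubR : (ℋ.L (Sum.inl v)) \ RC_trim ℋ σ v ⊆
      (Finset.univ.erase j).biUnion (fun l => (ℋ.L (Sum.inl v)).filter
        (fun c => ℋ.H.Adj (σ l) c)) := by
    intro c hc
    rw [Finset.mem_sdiff] at hc
    obtain ⟨hcL, hcnt⟩ := hc
    have hex : ∃ l, ℋ.H.Adj (σ l) c := by
      by_contra hno; push_neg at hno
      exact hcnt (RC_mem_trim.mpr ⟨hcL, hno⟩)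
    obtain ⟨l, hl⟩ := hex
    by_cases hlj : l = j
    · subst hlj
      have hcj : c ∈ (ℋ.L (Sum.inl v)).filter (fun d => ℋ.H.Adj (σ l) d) :=
        Finset.mem_filter.mpr ⟨hcL, hl⟩
      have hxj : x ∈ (ℋ.L (Sum.inl v)).filter (fun d => ℋ.H.Adj (σ l) d) :=
        Finset.mem_filter.mpr ⟨hx, hjx⟩
      have hcx : c = x := by
        have hcard := RC_nbr_card ℋ (hσ1 l) (y := Sum.inl v)
        rw [Finset.card_le_one] at hcard
        exact hcard _ hcj _ hxj
      subst hcx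
      exact Finset.mem_biUnion.mpr ⟨i, Finset.mem_erase.mpr ⟨hij, Finset.mem_univ i⟩,
        Finset.mem_filter.mpr ⟨hcL, hix⟩⟩
    · exact Finset.mem_biUnion.mpr ⟨l, Finset.mem_erase.mpr ⟨hlj, Finset.mem_univ l⟩,
        Finset.mem_filter.mpr ⟨hcL, hl⟩⟩
  have hcard1 : ((ℋ.L (Sum.inl v)) \ RC_trim ℋ σ v).card =
      (k + t - 1) - (RC_trim ℋ σ v).card := by
    rw [Finset.card_sdiff_of_subset RC_trim_subset, hL]
  have hcard2 : ((Finset.univ.erase j).biUnion (fun l => (ℋ.L (Sum.inl v)).filter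
      (fun c => ℋ.H.Adj (σ l) c))).card ≤ t - 1 := by
    refine le_trans Finset.card_biUnion_le ?_
    refine le_trans (Finset.sum_le_card_nsmul _ _ 1 ?_) ?_
    · intro l _; exact RC_nbr_card ℋ (hσ1 l)
    · rw [smul_eq_mul, mul_one, Finset.card_erase_of_mem (Finset.mem_univ j),
        Finset.card_univ, Fintype.card_fin]
  have hmono := Finset.card_le_card hsubR
  have hk := hGrob.1
  omega

lemma RC_WG_exists (hGrob : IsRobustlyKCritical G k)
    (ℋ : Cover (joinKt G t) α) (hfold : ℋ.IsKFold (k + t - 1)) (hbad : ¬ ℋ.Colorable)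
    {i : Fin t} {c : α} (hc : c ∈ ℋ.L (Sum.inr i)) (v : V) :
    ∃ x ∈ ℋ.L (Sum.inl v), ℋ.H.Adj c x := by
  obtain ⟨σ, hs, hmem, hind⟩ := RC_greedy ℋ hfold hGrob.1 (fun _ => ∅)
    (fun _ => by rw [Finset.card_empty]; have := hGrob.1; omega)
    {i} (fun _ => c)
    (fun j hj => by
      rw [Finset.mem_singleton] at hj; subst hj
      exact ⟨hc, Finset.notMem_empty c⟩)
    (fun a ha b hb hab => by
      rw [Finset.mem_singleton] at ha hb
      subst ha; subst hb; exact absurd rfl hab)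
  have hσi : σ i = c := hs i (Finset.mem_singleton_self i)
  by_contra hno
  push_neg at hno
  have hsubR : (ℋ.L (Sum.inl v)) \ RC_trim ℋ σ v ⊆
      (Finset.univ.erase i).biUnion (fun l => (ℋ.L (Sum.inl v)).filter
        (fun d => ℋ.H.Adj (σ l) d)) := by
    intro d hd
    rw [Finset.mem_sdiff] at hd
    obtain ⟨hdL, hdnt⟩ := hd
    have hex : ∃ l, ℋ.H.Adj (σ l) d := by
      by_contra hno2; push_neg at hno2
      exact hdnt (RC_mem_trim.mpr ⟨hdL, hno2⟩)
    obtain ⟨l, hl⟩ := hex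
    have hli : l ≠ i := by
      intro he; subst he
      rw [hσi] at hl
      exact hno d hdL hl
    exact Finset.mem_biUnion.mpr ⟨l, Finset.mem_erase.mpr ⟨hli, Finset.mem_univ l⟩,
      Finset.mem_filter.mpr ⟨hdL, hl⟩⟩
  have hcard1 : ((ℋ.L (Sum.inl v)) \ RC_trim ℋ σ v).card =
      (k + t - 1) - (RC_trim ℋ σ v).card := by
    rw [Finset.card_sdiff_of_subset RC_trim_subset, hfold (Sum.inl v)]
  have hcard2 : ((Finset.univ.erase i).biUnion (fun l => (ℋ.L (Sum.inl v)).filter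
      (fun d => ℋ.H.Adj (σ l) d))).card ≤ t - 1 := by
    refine le_trans Finset.card_biUnion_le ?_
    refine le_trans (Finset.sum_le_card_nsmul _ _ 1 ?_) ?_
    · intro l _
      exact RC_nbr_card ℋ (hmem l).1
    · rw [smul_eq_mul, mul_one, Finset.card_erase_of_mem (Finset.mem_univ i),
        Finset.card_univ, Fintype.card_fin]
  have hmono := Finset.card_le_card hsubR
  have htrimle := RC_trim_card_le hGrob ℋ hfold hbad σ (fun l => (hmem l).1) hind v
  have hk := hGrob.1
  have ht : 1 ≤ t := Fin.pos i
  omega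

lemma RC_GW_exists (hGrob : IsRobustlyKCritical G k)
    (ℋ : Cover (joinKt G t) α) (hfold : ℋ.IsKFold (k + t - 1)) (hbad : ¬ ℋ.Colorable)
    {v : V} {x : α} (hx : x ∈ ℋ.L (Sum.inl v)) (i : Fin t) :
    ∃ c ∈ ℋ.L (Sum.inr i), ℋ.H.Adj c x := by
  have hex : ∀ c ∈ ℋ.L (Sum.inr i), ∃ y ∈ ℋ.L (Sum.inl v), ℋ.H.Adj c y :=
    fun c hc => RC_WG_exists hGrob ℋ hfold hbad hc v
  choose! f hf1 hf2 using hex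
  have hsurj := Finset.surj_on_of_inj_on_of_card_le (s := ℋ.L (Sum.inr i))
    (t := ℋ.L (Sum.inl v)) (fun c _ => f c) (fun c hc => hf1 c hc)
    (fun a₁ a₂ ha₁ ha₂ he =>
      ℋ.matching (hf1 a₁ ha₁) ha₁ ha₂ (ℋ.H.adj_symm (hf2 a₁ ha₁))
        (by
          have he' : f a₁ = f a₂ := he
          rw [he']; exact ℋ.H.adj_symm (hf2 a₂ ha₂)))
    (by rw [hfold (Sum.inl v), hfold (Sum.inr i)])
  obtain ⟨c, hc, hcx⟩ := hsurj x hx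
  refine ⟨c, hc, ?_⟩
  rw [hcx]
  exact hf2 c hc

end Covers2
section Covers3

variable {V : Type} {G : SimpleGraph V} {k t : ℕ} {α : Type}

lemma RC_nbr_card' (ℋ : Cover (joinKt G t) α) {x y : V ⊕ Fin t} {c : α} (hc : c ∈ ℋ.L x) :
    ((ℋ.L y).filter (fun d => ℋ.H.Adj d c)).card ≤ 1 := by
  rw [Finset.card_le_one]
  intro a ha b hb
  rw [Finset.mem_filter] at ha hb
  exact ℋ.matching hc ha.1 hb.1 (ℋ.H.adj_symm ha.2) (ℋ.H.adj_symm hb.2)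

lemma RC_k2 (hGrob : IsRobustlyKCritical G k) {u v : V} (huv : G.Adj u v) : 2 ≤ k := by
  rcases Nat.lt_or_ge k 2 with hlt | hge
  · have hk1 : k = 1 := by have := hGrob.1; omega
    exact absurd huv ((RC_subsingleton (hk1 ▸ hGrob.2.1)).2 u v)
  · exact hge

lemma RC_WW_same_partner (hGrob : IsRobustlyKCritical G k)
    (ℋ : Cover (joinKt G t) α) (hfold : ℋ.IsKFold (k + t - 1)) (hbad : ¬ ℋ.Colorable)
    {i j : Fin t} (hij : i ≠ j) {c c' x : α}
    (hc : c ∈ ℋ.L (Sum.inr i)) (hc' : c' ∈ ℋ.L (Sum.inr j)) {v : V}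
    (hx : x ∈ ℋ.L (Sum.inl v)) (hcx : ℋ.H.Adj c x) (hc'x : ℋ.H.Adj c' x) :
    ℋ.H.Adj c c' := by
  by_contra hnadj
  obtain ⟨σ, hs, hmem, hind⟩ := RC_greedy ℋ hfold hGrob.1 (fun _ => ∅)
    (fun _ => by rw [Finset.card_empty]; have := hGrob.1; omega)
    {i, j} (fun l => if l = i then c else c')
    (by
      intro l hl
      rcases Finset.mem_insert.mp hl with rfl | hl
      · rw [if_pos rfl]; exact ⟨hc, Finset.notMem_empty c⟩
      · rw [Finset.mem_singleton] at hl; subst hl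
        rw [if_neg (Ne.symm hij)]
        exact ⟨hc', Finset.notMem_empty c'⟩)
    (by
      intro a ha b hb hab
      rcases Finset.mem_insert.mp ha with rfl | ha' <;>
        rcases Finset.mem_insert.mp hb with rfl | hb'
      · exact absurd rfl hab
      · rw [Finset.mem_singleton] at hb'; subst hb'
        rw [if_pos rfl, if_neg (Ne.symm hij)]
        exact hnadj
      · rw [Finset.mem_singleton] at ha'; subst ha'
        rw [if_pos rfl, if_neg (Ne.symm hij)]
        exact fun h => hnadj (ℋ.H.adj_symm h)
      · rw [Finset.mem_singleton] at ha' hb'; subst ha'; subst hb'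
        exact absurd rfl hab)
  have hσi : σ i = c := by
    have h := hs i (Finset.mem_insert_self i {j})
    rwa [if_pos rfl] at h
  have hσj : σ j = c' := by
    have h := hs j (Finset.mem_insert_of_mem (Finset.mem_singleton_self j))
    rwa [if_neg (Ne.symm hij)] at h
  exact RC_sigma_distinct hGrob ℋ hfold hbad σ (fun l => (hmem l).1) hind hx hij
    (by rw [hσi]; exact hcx) (by rw [hσj]; exact hc'x)

lemma RC_WW_exists (hGrob : IsRobustlyKCritical G k)
    (ℋ : Cover (joinKt G t) α) (hfold : ℋ.IsKFold (k + t - 1)) (hbad : ¬ ℋ.Colorable)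
    {i j : Fin t} (hij : i ≠ j) {c : α} (hc : c ∈ ℋ.L (Sum.inr i)) :
    ∃ c' ∈ ℋ.L (Sum.inr j), ℋ.H.Adj c c' := by
  have hV : Nonempty V := RC_nonempty hGrob.2.1 hGrob.1
  obtain ⟨v⟩ := hV
  obtain ⟨x, hx, hcx⟩ := RC_WG_exists hGrob ℋ hfold hbad hc v
  obtain ⟨d, hd, hdx⟩ := RC_GW_exists hGrob ℋ hfold hbad hx j
  exact ⟨d, hd, RC_WW_same_partner hGrob ℋ hfold hbad hij hc hd hx hcx hdx⟩

lemma RC_WW_partner_eq (hGrob : IsRobustlyKCritical G k)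
    (ℋ : Cover (joinKt G t) α) (hfold : ℋ.IsKFold (k + t - 1)) (hbad : ¬ ℋ.Colorable)
    {i j : Fin t} (hij : i ≠ j) {c c' : α}
    (hc : c ∈ ℋ.L (Sum.inr i)) (hc' : c' ∈ ℋ.L (Sum.inr j)) (hcc' : ℋ.H.Adj c c')
    {v : V} {x x' : α} (hx : x ∈ ℋ.L (Sum.inl v)) (hx' : x' ∈ ℋ.L (Sum.inl v))
    (hcx : ℋ.H.Adj c x) (hc'x' : ℋ.H.Adj c' x') : x = x' := by
  obtain ⟨d, hd, hdx'⟩ := RC_GW_exists hGrob ℋ hfold hbad hx' i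
  have hdc' : ℋ.H.Adj d c' :=
    RC_WW_same_partner hGrob ℋ hfold hbad hij hd hc' hx' hdx' hc'x'
  have hdc : d = c :=
    ℋ.matching hc' hd hc (ℋ.H.adj_symm hdc') (ℋ.H.adj_symm hcc')
  rw [hdc] at hdx'
  exact ℋ.matching hc hx hx' hcx hdx'

lemma RC_GG_exists (hGrob : IsRobustlyKCritical G k)
    (ℋ : Cover (joinKt G t) α) (hfold : ℋ.IsKFold (k + t - 1)) (hbad : ¬ ℋ.Colorable)
    {u v : V} (huv : G.Adj u v) {x : α} (hx : x ∈ ℋ.L (Sum.inl u)) :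
    ∃ y ∈ ℋ.L (Sum.inl v), ℋ.H.Adj x y := by
  have hk2 := RC_k2 hGrob huv
  obtain ⟨σ, hs, hmem, hind⟩ := RC_greedy ℋ hfold hGrob.1
    (fun l => (ℋ.L (Sum.inr l)).filter (fun d => ℋ.H.Adj d x))
    (fun l => by
      have h1 := RC_nbr_card' ℋ (y := Sum.inr l) hx
      omega)
    ∅ (fun _ => x) (fun l hl => absurd hl (Finset.notMem_empty l))
    (fun a ha => absurd ha (Finset.notMem_empty a))
  have hxtrim : x ∈ RC_trim ℋ σ u := by
    refine RC_mem_trim.mpr ⟨hx, fun l hadj => ?_⟩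
    exact (hmem l).2 (Finset.mem_filter.mpr ⟨(hmem l).1, hadj⟩)
  obtain ⟨y, hy, hxy⟩ := RC_trim_full hGrob ℋ hfold hbad σ (fun l => (hmem l).1) hind
    huv x hxtrim
  exact ⟨y, RC_trim_subset hy, hxy⟩

lemma RC_GG_hub (hGrob : IsRobustlyKCritical G k)
    (ℋ : Cover (joinKt G t) α) (hfold : ℋ.IsKFold (k + t - 1)) (hbad : ¬ ℋ.Colorable)
    {u v : V} (huv : G.Adj u v) {i : Fin t} {c x y : α}
    (hc : c ∈ ℋ.L (Sum.inr i)) (hx : x ∈ ℋ.L (Sum.inl u)) (hy : y ∈ ℋ.L (Sum.inl v))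
    (hcx : ℋ.H.Adj c x) (hxy : ℋ.H.Adj x y) : ℋ.H.Adj c y := by
  by_cases hcy : ℋ.H.Adj c y
  · exact hcy
  exfalso
  obtain ⟨σ, hs, hmem, hind⟩ := RC_greedy ℋ hfold hGrob.1
    (fun l => (ℋ.L (Sum.inr l)).filter (fun d => ℋ.H.Adj d y))
    (fun l => by
      have h1 := RC_nbr_card' ℋ (y := Sum.inr l) hy
      have h2 := RC_k2 hGrob huv
      omega)
    {i} (fun _ => c)
    (fun l hl => by
      rw [Finset.mem_singleton] at hl; subst hl
      exact ⟨hc, fun hmem => hcy (Finset.mem_filter.mp hmem).2⟩)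
    (fun a ha b hb hab => by
      rw [Finset.mem_singleton] at ha hb
      subst ha; subst hb; exact absurd rfl hab)
  have hσi : σ i = c := hs i (Finset.mem_singleton_self i)
  have hytrim : y ∈ RC_trim ℋ σ v := by
    refine RC_mem_trim.mpr ⟨hy, fun l hadj => ?_⟩
    exact (hmem l).2 (Finset.mem_filter.mpr ⟨(hmem l).1, hadj⟩)
  obtain ⟨x', hx', hyx'⟩ := RC_trim_full hGrob ℋ hfold hbad σ (fun l => (hmem l).1) hind
    (G.adj_symm huv) y hytrim
  have hxx' : x' = x :=
    ℋ.matching hy (RC_trim_subset hx') hx hyx' (ℋ.H.adj_symm hxy)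
  rw [hxx'] at hx'
  have := (RC_mem_trim.mp hx').2 i
  rw [hσi] at this
  exact this hcx

lemma RC_GG_same_hub (hGrob : IsRobustlyKCritical G k)
    (ℋ : Cover (joinKt G t) α) (hfold : ℋ.IsKFold (k + t - 1)) (hbad : ¬ ℋ.Colorable)
    {u v : V} (huv : G.Adj u v) {i : Fin t} {d x y : α}
    (hd : d ∈ ℋ.L (Sum.inr i)) (hx : x ∈ ℋ.L (Sum.inl u)) (hy : y ∈ ℋ.L (Sum.inl v))
    (hdx : ℋ.H.Adj d x) (hdy : ℋ.H.Adj d y) : ℋ.H.Adj x y := by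
  obtain ⟨y', hy', hxy'⟩ := RC_GG_exists hGrob ℋ hfold hbad huv hx
  have hdy' : ℋ.H.Adj d y' := RC_GG_hub hGrob ℋ hfold hbad huv hd hx hy' hdx hxy'
  have : y' = y := ℋ.matching hd hy' hy hdy' hdy
  rw [← this]
  exact hxy'

end Covers3
section Assembly

variable {V : Type} {G : SimpleGraph V} {k t : ℕ} {α : Type}

lemma RC_canonical_t0 (hGrob : IsRobustlyKCritical G k)
    (ℋ : Cover (joinKt G 0) α) (hfold : ℋ.IsKFold (k + 0 - 1)) (hbad : ¬ ℋ.Colorable) :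
    ℋ.Canonical (k + 0 - 1) := by
  let 𝒞 : Cover G α :=
    { H := ℋ.H
      L := fun v => ℋ.L (Sum.inl v)
      disj := fun u v huv => ℋ.disj (fun he => huv (Sum.inl.inj he))
      indep := fun v => ℋ.indep (Sum.inl v)
      covers := fun c => by
        obtain ⟨w, hw⟩ := ℋ.covers c
        rcases w with v | i
        · exact ⟨v, hw⟩
        · exact i.elim0
      adj_support := fun u v c c' hc hc' hadj =>
        RC_joinKt_adj_inl_inl.mp (ℋ.adj_support hc hc' hadj)
      matching := fun u v c c₁ c₂ hc hc₁ hc₂ => ℋ.matching hc hc₁ hc₂ }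
  have h1 : 𝒞.IsKFold (k - 1) := fun v => hfold (Sum.inl v)
  have h2 : ¬ 𝒞.Colorable := by
    rintro ⟨T, hT1, hT2⟩
    apply hbad
    refine ⟨fun x => match x with | Sum.inl v => T v | Sum.inr i => i.elim0, ?_, ?_⟩
    · rintro (v|i)
      · exact hT1 v
      · exact i.elim0
    · rintro (u|i) (v|j)
      · exact hT2 u v
      · exact j.elim0
      · exact i.elim0
      · exact i.elim0
  obtain ⟨lam, hbij, hiff⟩ := hGrob.2.2 α 𝒞 h1 h2
  refine ⟨lam, ?_, ?_⟩
  · rintro (v|i)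
    · exact hbij v
    · exact i.elim0
  · rintro (u|i) (v|j) hadj
    · exact hiff hadj
    · exact j.elim0
    · exact i.elim0
    · exact i.elim0

lemma RC_canonical_pos (hGrob : IsRobustlyKCritical G k) (ht : 0 < t)
    (ℋ : Cover (joinKt G t) α) (hfold : ℋ.IsKFold (k + t - 1)) (hbad : ¬ ℋ.Colorable) :
    ℋ.Canonical (k + t - 1) := by
  obtain ⟨vb⟩ := RC_nonempty hGrob.2.1 hGrob.1
  set i₀ : Fin t := ⟨0, ht⟩ with hi₀def
  have hubP : ∀ c : α, ∃ d, d ∈ ℋ.L (Sum.inr i₀) ∧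
      ((c ∈ ℋ.L (Sum.inr i₀) ∧ d = c) ∨ (c ∉ ℋ.L (Sum.inr i₀) ∧ ℋ.H.Adj d c)) := by
    intro c
    by_cases hc : c ∈ ℋ.L (Sum.inr i₀)
    · exact ⟨c, hc, Or.inl ⟨hc, rfl⟩⟩
    · obtain ⟨w, hw⟩ := ℋ.covers c
      rcases w with v | i
      · obtain ⟨d, hd, hdc⟩ := RC_GW_exists hGrob ℋ hfold hbad hw i₀
        exact ⟨d, hd, Or.inr ⟨hc, hdc⟩⟩
      · have hi : i ≠ i₀ := fun he => hc (by rw [← he]; exact hw)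
        obtain ⟨d, hd, hcd⟩ := RC_WW_exists hGrob ℋ hfold hbad hi hw
        exact ⟨d, hd, Or.inr ⟨hc, ℋ.H.adj_symm hcd⟩⟩
  choose hp hp1 hp2 using hubP
  have hubAdj : ∀ (w : V ⊕ Fin t), w ≠ Sum.inr i₀ → ∀ c ∈ ℋ.L w, ℋ.H.Adj (hp c) c := by
    intro w hw c hc
    rcases hp2 c with ⟨hmem, _⟩ | ⟨_, hadj⟩
    · exact absurd hmem (Finset.disjoint_left.mp (ℋ.disj hw) hc)
    · exact hadj
  have hubId : ∀ c ∈ ℋ.L (Sum.inr i₀), hp c = c := by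
    intro c hc
    rcases hp2 c with ⟨_, he⟩ | ⟨hnot, _⟩
    · exact he
    · exact absurd hc hnot
  have hubU : ∀ (w : V ⊕ Fin t) (c : α), c ∈ ℋ.L w → ∀ d', d' ∈ ℋ.L (Sum.inr i₀) →
      ℋ.H.Adj d' c → hp c = d' := by
    intro w c hc d' hd' hadj
    by_cases hw : w = Sum.inr i₀
    · subst hw
      exact absurd hadj (ℋ.indep (Sum.inr i₀) d' hd' c hc)
    · have h1 := hubAdj w hw c hc
      exact ℋ.matching hc (hp1 c) hd' (ℋ.H.adj_symm h1) (ℋ.H.adj_symm hadj)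
  -- injectivity and surjectivity of the hub partner on each list
  have hinj : ∀ w : V ⊕ Fin t, ∀ c ∈ ℋ.L w, ∀ c' ∈ ℋ.L w, hp c = hp c' → c = c' := by
    intro w c hc c' hc' he
    by_cases hw : w = Sum.inr i₀
    · subst hw
      calc c = hp c := (hubId c hc).symm
        _ = hp c' := he
        _ = c' := hubId c' hc'
    · have h1 := hubAdj w hw c hc
      have h2 := hubAdj w hw c' hc'
      rw [he] at h1
      exact ℋ.matching (hp1 c') hc hc' h1 h2
  have hsurj : ∀ w : V ⊕ Fin t, ∀ d, d ∈ ℋ.L (Sum.inr i₀) → ∃ c ∈ ℋ.L w, hp c = d := by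
    intro w d hd
    rcases w with v | i
    · obtain ⟨x, hx, hdx⟩ := RC_WG_exists hGrob ℋ hfold hbad hd v
      exact ⟨x, hx, hubU _ x hx d hd hdx⟩
    · by_cases hi : i = i₀
      · subst hi; exact ⟨d, hd, hubId d hd⟩
      · obtain ⟨c, hcL, hdc⟩ := RC_WW_exists hGrob ℋ hfold hbad (Ne.symm hi) hd
        exact ⟨c, hcL, hubU _ c hcL d hd hdc⟩
  -- the cross iff
  have hcross : ∀ (u : V) (j : Fin t) (x c' : α), x ∈ ℋ.L (Sum.inl u) →
      c' ∈ ℋ.L (Sum.inr j) → (ℋ.H.Adj x c' ↔ hp x = hp c') := by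
    intro u j x c' hx hc'
    by_cases hj : j = i₀
    · subst hj
      rw [hubId c' hc']
      constructor
      · intro h
        exact hubU _ x hx c' hc' (ℋ.H.adj_symm h)
      · intro h
        have h2 := hubAdj (Sum.inl u) Sum.inl_ne_inr x hx
        rw [h] at h2
        exact ℋ.H.adj_symm h2
    · have hd' : ℋ.H.Adj (hp c') c' :=
        hubAdj _ (fun he => hj (Sum.inr.inj he)) c' hc'
      constructor
      · intro hxc'
        obtain ⟨xd, hxd, hd'xd⟩ := RC_WG_exists hGrob ℋ hfold hbad (hp1 c') u
        have hxeq : x = xd := RC_WW_partner_eq hGrob ℋ hfold hbad hj hc' (hp1 c')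
          (ℋ.H.adj_symm hd') hx hxd (ℋ.H.adj_symm hxc') hd'xd
        rw [← hxeq] at hd'xd
        exact hubU _ x hx (hp c') (hp1 c') hd'xd
      · intro he
        obtain ⟨z, hz, hc'z⟩ := RC_WG_exists hGrob ℋ hfold hbad hc' u
        have hax : ℋ.H.Adj (hp c') x := by
          have h2 := hubAdj (Sum.inl u) Sum.inl_ne_inr x hx
          rw [he] at h2
          exact h2
        have hzx : z = x := RC_WW_partner_eq hGrob ℋ hfold hbad hj hc' (hp1 c')
          (ℋ.H.adj_symm hd') hz hx hc'z hax
        rw [hzx] at hc'z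
        exact ℋ.H.adj_symm hc'z
  -- the clique-clique iff
  have hWW : ∀ (i j : Fin t), i ≠ j → ∀ c ∈ ℋ.L (Sum.inr i), ∀ c' ∈ ℋ.L (Sum.inr j),
      (ℋ.H.Adj c c' ↔ hp c = hp c') := by
    intro i j hij c hc c' hc'
    by_cases hi : i = i₀
    · subst hi
      rw [hubId c hc]
      constructor
      · intro h
        exact (hubU _ c' hc' c hc h).symm
      · intro h
        have h2 := hubAdj _ (fun he => hij (Sum.inr.inj he).symm) c' hc'
        rw [← h] at h2
        exact h2
    · by_cases hj : j = i₀
      · subst hj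
        rw [hubId c' hc']
        constructor
        · intro h
          exact hubU _ c hc c' hc' (ℋ.H.adj_symm h)
        · intro h
          have h2 := hubAdj _ (fun he => hi (Sum.inr.inj he)) c hc
          rw [h] at h2
          exact ℋ.H.adj_symm h2
      · have hd : ℋ.H.Adj (hp c) c := hubAdj _ (fun he => hi (Sum.inr.inj he)) c hc
        have hd' : ℋ.H.Adj (hp c') c' := hubAdj _ (fun he => hj (Sum.inr.inj he)) c' hc'
        obtain ⟨xc, hxc, hcxc⟩ := RC_WG_exists hGrob ℋ hfold hbad hc vb
        obtain ⟨xc', hxc', hc'xc'⟩ := RC_WG_exists hGrob ℋ hfold hbad hc' vb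
        obtain ⟨xd, hxd, hdxd⟩ := RC_WG_exists hGrob ℋ hfold hbad (hp1 c) vb
        obtain ⟨xd', hxd', hd'xd'⟩ := RC_WG_exists hGrob ℋ hfold hbad (hp1 c') vb
        have he1 : xc = xd := RC_WW_partner_eq hGrob ℋ hfold hbad hi hc (hp1 c)
          (ℋ.H.adj_symm hd) hxc hxd hcxc hdxd
        have he2 : xc' = xd' := RC_WW_partner_eq hGrob ℋ hfold hbad hj hc' (hp1 c')
          (ℋ.H.adj_symm hd') hxc' hxd' hc'xc' hd'xd'
        constructor
        · intro h
          have he3 : xc = xc' := RC_WW_partner_eq hGrob ℋ hfold hbad hij hc hc' h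
            hxc hxc' hcxc hc'xc'
          have hB : ℋ.H.Adj (hp c') xd := by
            rw [he1.symm.trans (he3.trans he2)]
            exact hd'xd'
          exact ℋ.matching hxd (hp1 c) (hp1 c') (ℋ.H.adj_symm hdxd) (ℋ.H.adj_symm hB)
        · intro h
          have hxdeq : xd = xd' := by
            rw [h] at hdxd
            exact ℋ.matching (hp1 c') hxd hxd' hdxd hd'xd'
          have hshare : xc = xc' := he1.trans (hxdeq.trans he2.symm)
          refine RC_WW_same_partner hGrob ℋ hfold hbad hij hc hc' hxc hcxc ?_
          rw [← hshare] at hc'xc'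
          exact hc'xc'
  -- assemble the canonical labeling
  set e := Finset.equivFinOfCardEq (hfold (Sum.inr i₀)) with hedef
  have hkey : ∀ c c' : α, (e ⟨hp c, hp1 c⟩ = e ⟨hp c', hp1 c'⟩) ↔ hp c = hp c' := by
    intro c c'
    constructor
    · intro h
      exact Subtype.ext_iff.mp (e.injective h)
    · intro h
      exact congrArg e (Subtype.ext h)
  refine ⟨fun c => e ⟨hp c, hp1 c⟩, ?_, ?_⟩
  · intro w
    refine ⟨fun c _ => Set.mem_univ _, ?_, ?_⟩
    · intro c hc c' hc' he
      have he' : e ⟨hp c, hp1 c⟩ = e ⟨hp c', hp1 c'⟩ := he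
      exact hinj w c (Finset.mem_coe.mp hc) c' (Finset.mem_coe.mp hc')
        ((hkey c c').mp he')
    · intro b _
      obtain ⟨c, hc, hcd⟩ := hsurj w (e.symm b).1 (e.symm b).2
      refine ⟨c, Finset.mem_coe.mpr hc, ?_⟩
      show e ⟨hp c, hp1 c⟩ = b
      have hsub : (⟨hp c, hp1 c⟩ : {x // x ∈ ℋ.L (Sum.inr i₀)}) = e.symm b :=
        Subtype.ext hcd
      rw [hsub, Equiv.apply_symm_apply]
  · rintro (u|i) (v|j) hadj c hc c' hc'
    · have hG : G.Adj u v := hadj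
      show ℋ.H.Adj c c' ↔ e ⟨hp c, hp1 c⟩ = e ⟨hp c', hp1 c'⟩
      rw [hkey c c']
      constructor
      · intro hcc'
        have h1 := hubAdj _ Sum.inl_ne_inr c hc
        have h2 := RC_GG_hub hGrob ℋ hfold hbad hG (hp1 c) hc hc' h1 hcc'
        exact (hubU _ c' hc' (hp c) (hp1 c) h2).symm
      · intro he
        have h1 := hubAdj _ Sum.inl_ne_inr c hc
        have h2 := hubAdj _ Sum.inl_ne_inr c' hc'
        rw [← he] at h2
        exact RC_GG_same_hub hGrob ℋ hfold hbad hG (hp1 c) hc hc' h1 h2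
    · show ℋ.H.Adj c c' ↔ e ⟨hp c, hp1 c⟩ = e ⟨hp c', hp1 c'⟩
      rw [hkey c c']
      exact hcross u j c c' hc hc'
    · show ℋ.H.Adj c c' ↔ e ⟨hp c, hp1 c⟩ = e ⟨hp c', hp1 c'⟩
      rw [hkey c c']
      constructor
      · intro h
        exact ((hcross v i c' c hc' hc).mp (ℋ.H.adj_symm h)).symm
      · intro h
        exact ℋ.H.adj_symm ((hcross v i c' c hc' hc).mpr h.symm)
    · have hij : i ≠ j := hadj
      show ℋ.H.Adj c c' ↔ e ⟨hp c, hp1 c⟩ = e ⟨hp c', hp1 c'⟩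
      rw [hkey c c']
      exact hWW i j hij c hc c' hc'

end Assembly
/-- If `G` is robustly critical, then `G ∨ K_t` is robustly critical
for every natural number `t`. -/
theorem join_clique_robustly_critical
    {V : Type} (G : SimpleGraph V)
    (hG : ∃ k, IsRobustlyKCritical G k) (t : ℕ) :
    ∃ k', IsRobustlyKCritical (joinKt G t) k' := by
  obtain ⟨k, hGrob⟩ := hG
  have hk := hGrob.1
  refine ⟨k + t, by omega, RC_join_critical hk hGrob.2.1 t, ?_⟩
  intro α ℋ hfold hbad
  rcases Nat.eq_zero_or_pos t with rfl | ht
  · exact RC_canonical_t0 hGrob ℋ hfold hbad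
  · exact RC_canonical_pos hGrob ht ℋ hfold hbad
end

section
/- If G is a robustly k-critical graph and ℋ = (L, H) is a bad cover of G such that |L(u)| ≥ k−1 for every vertex u ∈ V(G), then ℋ is a canonical (k−1)-fold cover of G (in particular, |L(u)| = k−1 for all u). -/
/-- If `G` is robustly `k`-critical and `ℋ = (L, H)` is a bad cover of
`G` with `|L(u)| ≥ k−1` for every vertex `u`, then `ℋ` is a canonical `(k−1)`-fold
cover of `G`. -/
theorem bad_cover_of_robustly_critical_is_canonical
    {V α : Type} (G : SimpleGraph V) (k : ℕ)
    (hG : IsRobustlyKCritical G k) (𝒞 : Cover G α)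
    (hL : ∀ u : V, k - 1 ≤ (𝒞.L u).card)
    (hbad : ¬ 𝒞.Colorable) :
    𝒞.IsKFold (k - 1) ∧ 𝒞.Canonical (k - 1) := by
    classical
  obtain ⟨hk, hcrit, hrob⟩ := hG
  choose L' hsub hcard using fun v => Finset.exists_subset_card_eq (s := 𝒞.L v) (n := k-1) (hL v)
  set S : Set α := {c | ∃ v, c ∈ L' v} with hSdef
  let L'' : V → Finset S := fun v => (L' v).subtype (· ∈ S)
  have hmem'' : ∀ (v : V) (c : S), c ∈ L'' v ↔ (c : α) ∈ L' v := by
    intro v c; simp [L'', Finset.mem_subtype]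
  let 𝒞' : Cover G S :=
    { H := SimpleGraph.induce S 𝒞.H
      L := L''
      disj := by
        intro u v huv
        rw [Finset.disjoint_left]
        intro c hcu hcv
        exact (Finset.disjoint_left.mp (𝒞.disj huv)) (hsub u ((hmem'' u c).mp hcu))
          (hsub v ((hmem'' v c).mp hcv))
      indep := by
        intro v c hc c' hc' hadj
        exact 𝒞.indep v c (hsub v ((hmem'' v c).mp hc)) c' (hsub v ((hmem'' v c').mp hc')) hadj
      covers := by
        intro c
        obtain ⟨v, hv⟩ := c.2
        exact ⟨v, (hmem'' v c).mpr hv⟩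
      adj_support := by
        intro u v c c' hc hc' hadj
        exact 𝒞.adj_support (hsub u ((hmem'' u c).mp hc)) (hsub v ((hmem'' v c').mp hc')) hadj
      matching := by
        intro u v c c₁ c₂ hc hc1 hc2 h1 h2
        exact Subtype.ext (𝒞.matching (hsub u ((hmem'' u c).mp hc))
          (hsub v ((hmem'' v c₁).mp hc1)) (hsub v ((hmem'' v c₂).mp hc2)) h1 h2) }
  have hfold' : 𝒞'.IsKFold (k-1) := by
    intro v
    have hall : ∀ c ∈ L' v, c ∈ S := fun c hc => ⟨v, hc⟩
    show ((L' v).subtype (· ∈ S)).card = k - 1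
    rw [Finset.card_subtype, Finset.filter_true_of_mem hall]
    exact hcard v
  have hbad' : ¬ 𝒞'.Colorable := by
    rintro ⟨T, hT1, hT2⟩
    exact hbad ⟨fun v => ↑(T v), fun v => hsub v ((hmem'' v (T v)).mp (hT1 v)),
      fun u v h => hT2 u v h⟩
  obtain ⟨lam', hbij, hedge⟩ := hrob S 𝒞' hfold' hbad'
  have hfold : 𝒞.IsKFold (k-1) := by
    intro u
    by_contra hne
    have hcardlt : k - 1 < (𝒞.L u).card := lt_of_le_of_ne (hL u) (Ne.symm hne)
    have hnsub : ¬ (𝒞.L u ⊆ L' u) := by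
      intro h
      have h2 := Finset.card_le_card h
      have h3 := hcard u
      omega
    obtain ⟨c₀, hc₀, hc₀'⟩ := Finset.not_subset.mp hnsub
    set S' : Set V := {v | v ≠ u} with hS'
    set G' : G.Subgraph := (⊤ : G.Subgraph).induce S' with hG'
    have hGne : G' ≠ ⊤ := by
      intro h
      have hu : u ∈ G'.verts := h ▸ (by trivial : u ∈ (⊤ : G.Subgraph).verts)
      simp [hG', S'] at hu
    have hlt2 := hcrit.2 G' hGne
    have hcol : G'.coe.Colorable (k-1) := by
      obtain ⟨m, hm⟩ := WithTop.ne_top_iff_exists.mp (ne_top_of_lt hlt2)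
      have hmk : m < k := by
        rw [← hm] at hlt2
        exact Nat.cast_lt.mp hlt2
      exact (SimpleGraph.chromaticNumber_le_iff_colorable.mp (le_of_eq hm.symm)).mono
        (by omega)
    obtain ⟨f⟩ := hcol
    have hvmem : ∀ v : V, v ≠ u → v ∈ G'.verts := by
      intro v hv; simp [hG', S', hv]
    have pick : ∀ (v : V) (h : v ≠ u), ∃ c : S, c ∈ L'' v ∧ lam' c = f ⟨v, hvmem v h⟩ := by
      intro v h
      obtain ⟨x, hx, hx'⟩ := (hbij v).surjOn (Set.mem_univ (f ⟨v, hvmem v h⟩))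
      exact ⟨x, Finset.mem_coe.mp hx, hx'⟩
    choose pk hpk1 hpk2 using pick
    set T : V → α := fun v => if h : v = u then c₀ else ↑(pk v h) with hT
    have hTmem : ∀ v, T v ∈ 𝒞.L v := by
      intro v
      by_cases h : v = u
      · subst h; simpa [hT] using hc₀
      · simp only [hT, dif_neg h]
        exact hsub v ((hmem'' v _).mp (hpk1 v h))
    apply hbad
    refine ⟨T, hTmem, ?_⟩
    intro v w hadj
    by_cases hvw : v = w
    · subst hvw; exact 𝒞.H.irrefl hadj
    have hGadj : G.Adj v w := 𝒞.adj_support (hTmem v) (hTmem w) hadj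
    by_cases hv : v = u
    · have hw : w ≠ u := fun h => hvw (hv.trans h.symm)
      have hTv : T v = c₀ := dif_pos hv
      have hTw : T w = ↑(pk w hw) := dif_neg hw
      rw [hTv, hTw] at hadj
      obtain ⟨p, hp, hp'⟩ := (hbij u).surjOn (Set.mem_univ (lam' (pk w hw)))
      have hH' : 𝒞'.H.Adj p (pk w hw) :=
        (hedge (hv ▸ hGadj) p (Finset.mem_coe.mp hp) (pk w hw) (hpk1 w hw)).mpr hp'
      have hHadj : 𝒞.H.Adj ↑p ↑(pk w hw) := hH'
      have hpu : (↑p : α) ∈ L' u := (hmem'' u p).mp (Finset.mem_coe.mp hp)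
      have heq : c₀ = ↑p :=
        𝒞.matching (hsub w ((hmem'' w _).mp (hpk1 w hw))) hc₀ (hsub u hpu)
          hadj.symm hHadj.symm
      exact hc₀' (heq ▸ hpu)
    · by_cases hw : w = u
      · have hTw : T w = c₀ := dif_pos hw
        have hTv : T v = ↑(pk v hv) := dif_neg hv
        rw [hTv, hTw] at hadj
        obtain ⟨p, hp, hp'⟩ := (hbij u).surjOn (Set.mem_univ (lam' (pk v hv)))
        have hH' : 𝒞'.H.Adj p (pk v hv) :=
          (hedge (hw ▸ hGadj.symm) p (Finset.mem_coe.mp hp) (pk v hv) (hpk1 v hv)).mpr hp'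
        have hHadj : 𝒞.H.Adj ↑p ↑(pk v hv) := hH'
        have hpu : (↑p : α) ∈ L' u := (hmem'' u p).mp (Finset.mem_coe.mp hp)
        have heq : c₀ = ↑p :=
          𝒞.matching (hsub v ((hmem'' v _).mp (hpk1 v hv))) hc₀ (hsub u hpu)
            hadj hHadj.symm
        exact hc₀' (heq ▸ hpu)
      · have hTv : T v = ↑(pk v hv) := dif_neg hv
        have hTw : T w = ↑(pk w hw) := dif_neg hw
        rw [hTv, hTw] at hadj
        have hH' : 𝒞'.H.Adj (pk v hv) (pk w hw) := hadj
        have heq := (hedge hGadj _ (hpk1 v hv) _ (hpk1 w hw)).mp hH'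
        rw [hpk2 v hv, hpk2 w hw] at heq
        have hcoe : G'.coe.Adj ⟨v, hvmem v hv⟩ ⟨w, hvmem w hw⟩ := by
          simp only [SimpleGraph.Subgraph.coe_adj, hG', SimpleGraph.Subgraph.induce_adj,
            SimpleGraph.Subgraph.top_adj]
          exact ⟨hv, hw, hGadj⟩
        exact f.valid hcoe heq
  have hLeq : ∀ v, L' v = 𝒞.L v := fun v =>
    Finset.eq_of_subset_of_card_le (hsub v) (by rw [hcard v, hfold v])
  have hmemS : ∀ c : α, c ∈ S := by
    intro c
    obtain ⟨v, hv⟩ := 𝒞.covers c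
    exact ⟨v, (hLeq v).symm ▸ hv⟩
  have hmemL'' : ∀ (v : V) (c : α), c ∈ 𝒞.L v → (⟨c, hmemS c⟩ : S) ∈ L'' v := by
    intro v c hc
    exact (hmem'' v _).mpr ((hLeq v).symm ▸ hc)
  refine ⟨hfold, ⟨fun c => lam' ⟨c, hmemS c⟩, ?_, ?_⟩⟩
  · intro v
    refine ⟨fun c _ => Set.mem_univ _, ?_, ?_⟩
    · intro c hc c' hc' h
      have := (hbij v).injOn (Finset.mem_coe.mpr (hmemL'' v c (Finset.mem_coe.mp hc)))
        (Finset.mem_coe.mpr (hmemL'' v c' (Finset.mem_coe.mp hc'))) h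
      exact congrArg Subtype.val this
    · intro j _
      obtain ⟨x, hx, hx'⟩ := (hbij v).surjOn (Set.mem_univ j)
      have hxv : (↑x : α) ∈ 𝒞.L v := (hLeq v) ▸ (hmem'' v x).mp (Finset.mem_coe.mp hx)
      refine ⟨↑x, Finset.mem_coe.mpr hxv, ?_⟩
      have hxeq : (⟨↑x, hmemS ↑x⟩ : S) = x := Subtype.ext rfl
      show lam' ⟨↑x, hmemS ↑x⟩ = j
      rw [hxeq]; exact hx'
  · intro u v h c hc c' hc'
    have h1 := hmemL'' u c hc
    have h2 := hmemL'' v c' hc'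
    constructor
    · intro ha
      exact (hedge h _ h1 _ h2).mp ha
    · intro ha
      exact (hedge h _ h1 _ h2).mpr ha
end

section
/- Let G be a graph that is k-critical but not robustly k-critical for some k ≥ 1. Then G has a non-canonical bad full (k−1)-fold cover. -/
open Finset in
lemma exists_matching_extension {α : Type} (s t : Finset α) (hst : s.card = t.card)
    (R : α → α → Prop)
    (h1 : ∀ c ∈ s, ∀ c₁ ∈ t, ∀ c₂ ∈ t, R c c₁ → R c c₂ → c₁ = c₂)
    (h2 : ∀ c₁ ∈ s, ∀ c₂ ∈ s, ∀ c ∈ t, R c₁ c → R c₂ c → c₁ = c₂) :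
    ∃ f : α → α, Set.BijOn f s t ∧ ∀ c ∈ s, ∀ c' ∈ t, R c c' → f c = c' := by
  classical
  set s₁ : Finset α := s.filter (fun c => ∃ c' ∈ t, R c c') with hs₁def
  have hs₁s : s₁ ⊆ s := filter_subset _ _
  have hmem : ∀ c ∈ s₁, ∃ c' ∈ t, R c c' := fun c hc => (mem_filter.mp hc).2
  choose pf hpf₁ hpf₂ using hmem
  have hpinj : ∀ (c : α) (hc : c ∈ s₁) (d : α) (hd : d ∈ s₁),
      pf c hc = pf d hd → c = d := by
    intro c hc d hd he
    exact h2 c (hs₁s hc) d (hs₁s hd) (pf d hd) (hpf₁ d hd) (he ▸ hpf₂ c hc) (hpf₂ d hd)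
  set t₁ : Finset α := s₁.attach.image (fun c => pf c.1 c.2) with ht₁def
  have ht₁t : t₁ ⊆ t := by
    intro x hx
    obtain ⟨c, _, rfl⟩ := mem_image.mp hx
    exact hpf₁ c.1 c.2
  have hcard₁ : t₁.card = s₁.card := by
    rw [ht₁def, card_image_of_injective _ (fun a b hab => Subtype.ext (hpinj a.1 a.2 b.1 b.2 hab)),
      card_attach]
  have hcards : (s \ s₁).card = (t \ t₁).card := by
    rw [card_sdiff_of_subset hs₁s, card_sdiff_of_subset ht₁t, hst, hcard₁]
  let e : ((s \ s₁) : Finset α) ≃ ((t \ t₁) : Finset α) := Finset.equivOfCardEq hcards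
  set f : α → α := fun c =>
    if hc : c ∈ s₁ then pf c hc else if hc2 : c ∈ s \ s₁ then (e ⟨c, hc2⟩ : α) else c with hfdef
  have hf_mem : ∀ c (hc : c ∈ s₁), f c = pf c hc := fun c hc => dif_pos hc
  have hf_nmem : ∀ c (hc : c ∈ s \ s₁), f c = (e ⟨c, hc⟩ : α) := by
    intro c hc
    have hc1 : c ∉ s₁ := (mem_sdiff.mp hc).2
    rw [hfdef]
    simp only [dif_neg hc1, dif_pos hc]
  have hft₁ : ∀ c (hc : c ∈ s₁), f c ∈ t₁ := by
    intro c hc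
    rw [hf_mem c hc]
    exact mem_image.mpr ⟨⟨c, hc⟩, mem_attach _ _, rfl⟩
  refine ⟨f, ⟨?_, ?_, ?_⟩, ?_⟩
  · -- MapsTo
    intro c hc
    simp only [mem_coe] at hc ⊢
    by_cases hc1 : c ∈ s₁
    · exact ht₁t (hft₁ c hc1)
    · have hc2 : c ∈ s \ s₁ := mem_sdiff.mpr ⟨hc, hc1⟩
      rw [hf_nmem c hc2]
      exact (mem_sdiff.mp (e ⟨c, hc2⟩).2).1
  · -- InjOn
    intro a ha b hb hab
    simp only [mem_coe] at ha hb
    by_cases ha1 : a ∈ s₁ <;> by_cases hb1 : b ∈ s₁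
    · exact hpinj a ha1 b hb1 (by rw [← hf_mem a ha1, ← hf_mem b hb1, hab])
    · exfalso
      have hb2 : b ∈ s \ s₁ := mem_sdiff.mpr ⟨hb, hb1⟩
      have := (mem_sdiff.mp (e ⟨b, hb2⟩).2).2
      rw [← hf_nmem b hb2, ← hab] at this
      exact this (hft₁ a ha1)
    · exfalso
      have ha2 : a ∈ s \ s₁ := mem_sdiff.mpr ⟨ha, ha1⟩
      have := (mem_sdiff.mp (e ⟨a, ha2⟩).2).2
      rw [← hf_nmem a ha2, hab] at this
      exact this (hft₁ b hb1)
    · have ha2 : a ∈ s \ s₁ := mem_sdiff.mpr ⟨ha, ha1⟩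
      have hb2 : b ∈ s \ s₁ := mem_sdiff.mpr ⟨hb, hb1⟩
      rw [hf_nmem a ha2, hf_nmem b hb2] at hab
      have := e.injective (Subtype.ext hab)
      exact Subtype.ext_iff.mp this
  · -- SurjOn
    intro x hx
    simp only [mem_coe] at hx
    by_cases hx1 : x ∈ t₁
    · obtain ⟨c, _, hce⟩ := mem_image.mp hx1
      exact ⟨c.1, mem_coe.mpr (hs₁s c.2), by rw [hf_mem c.1 c.2]; exact hce⟩
    · have hx2 : x ∈ t \ t₁ := mem_sdiff.mpr ⟨hx, hx1⟩
      refine ⟨(e.symm ⟨x, hx2⟩ : α), mem_coe.mpr ((mem_sdiff.mp (e.symm ⟨x, hx2⟩).2).1), ?_⟩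
      rw [hf_nmem _ (e.symm ⟨x, hx2⟩).2]
      simp
  · -- extension
    intro c hc c' hc' hR
    have hc1 : c ∈ s₁ := mem_filter.mpr ⟨hc, c', hc', hR⟩
    rw [hf_mem c hc1]
    exact h1 c hc (pf c hc1) (hpf₁ c hc1) c' hc' (hpf₂ c hc1) hR

/-- If `G` is `k`-critical (`k ≥ 1`) but not robustly `k`-critical,
then `G` has a non-canonical bad full `(k−1)`-fold cover. -/
theorem exists_noncanonical_bad_full_cover
    {V : Type} (G : SimpleGraph V) (k : ℕ) (hk : 1 ≤ k)
    (hcrit : IsKCritical G k) (hnot : ¬ IsRobustlyKCritical G k) :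
    ∃ (α : Type) (𝒞 : Cover G α), 𝒞.IsKFold (k - 1) ∧ 𝒞.Full ∧
      ¬ 𝒞.Colorable ∧ ¬ 𝒞.Canonical (k - 1) := by
  classical
  have hx : ¬ ∀ (α : Type) (𝒞 : Cover G α), 𝒞.IsKFold (k - 1) → ¬ 𝒞.Colorable →
      𝒞.Canonical (k - 1) := fun h => hnot ⟨hk, hcrit, h⟩
  push_neg at hx
  obtain ⟨α, 𝒞, hfold, hbad, hnc⟩ := hx
  rcases Nat.lt_or_ge k 2 with hk1 | hk2
  · -- k = 1 : lists are empty, 𝒞 is already full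
    refine ⟨α, 𝒞, hfold, ?_, hbad, hnc⟩
    intro u v _ c hc
    have h0 : (𝒞.L u).card = 0 := by rw [hfold u]; omega
    rw [Finset.card_eq_zero] at h0
    simp [h0] at hc
  -- main case k ≥ 2
  letI : LinearOrder V := IsWellOrder.linearOrder WellOrderingRel
  have huniq : ∀ {c : α} {u v : V}, c ∈ 𝒞.L u → c ∈ 𝒞.L v → u = v := by
    intro c u v h1 h2
    by_contra hne
    exact (Finset.disjoint_left.mp (𝒞.disj hne) h1) h2
  have hext : ∀ u v : V, G.Adj u v → ∃ f : α → α, Set.BijOn f (𝒞.L u) (𝒞.L v) ∧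
      ∀ c ∈ 𝒞.L u, ∀ c' ∈ 𝒞.L v, 𝒞.H.Adj c c' → f c = c' := by
    intro u v _
    refine exists_matching_extension (𝒞.L u) (𝒞.L v) (by rw [hfold u, hfold v]) 𝒞.H.Adj
      (fun c hc c₁ h₁ c₂ h₂ r₁ r₂ => 𝒞.matching hc h₁ h₂ r₁ r₂)
      (fun c₁ h₁ c₂ h₂ c hc r₁ r₂ => 𝒞.matching hc h₁ h₂ r₁.symm r₂.symm)
  set F : V → V → α → α := fun u v =>
    if h : G.Adj u v then (hext u v h).choose else id with hFdef
  have hF1 : ∀ {u v : V}, G.Adj u v → Set.BijOn (F u v) (𝒞.L u) (𝒞.L v) := by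
    intro u v h
    rw [hFdef]; simp only [dif_pos h]
    exact (hext u v h).choose_spec.1
  have hF2 : ∀ {u v : V}, G.Adj u v → ∀ c ∈ 𝒞.L u, ∀ c' ∈ 𝒞.L v,
      𝒞.H.Adj c c' → F u v c = c' := by
    intro u v h
    rw [hFdef]; simp only [dif_pos h]
    exact (hext u v h).choose_spec.2
  set Adj' : α → α → Prop := fun c c' => ∃ u v, G.Adj u v ∧ c ∈ 𝒞.L u ∧ c' ∈ 𝒞.L v ∧
      ((u < v ∧ F u v c = c') ∨ (v < u ∧ F v u c' = c)) with hAdj'def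
  have hH'symm : ∀ {c c'}, Adj' c c' → Adj' c' c := by
    rintro c c' ⟨u, v, hadj, hc, hc', hor⟩
    exact ⟨v, u, hadj.symm, hc', hc, hor.elim (fun ⟨h, e⟩ => Or.inr ⟨h, e⟩)
      (fun ⟨h, e⟩ => Or.inl ⟨h, e⟩)⟩
  have hle : ∀ {c c'}, 𝒞.H.Adj c c' → Adj' c c' := by
    intro c c' h
    obtain ⟨u, hu⟩ := 𝒞.covers c
    obtain ⟨v, hv⟩ := 𝒞.covers c'
    have hadj := 𝒞.adj_support hu hv h
    refine ⟨u, v, hadj, hu, hv, ?_⟩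
    rcases lt_or_gt_of_ne hadj.ne with hlt | hlt
    · exact Or.inl ⟨hlt, hF2 hadj c hu c' hv h⟩
    · exact Or.inr ⟨hlt, hF2 hadj.symm c' hv c hu h.symm⟩
  set 𝒞' : Cover G α :=
    { H := { Adj := Adj'
             symm := ⟨fun _ _ h => hH'symm h⟩
             loopless := ⟨by
               rintro c ⟨u, v, hadj, hc, hc', _⟩
               exact hadj.ne (huniq hc hc')⟩ }
      L := 𝒞.L
      disj := 𝒞.disj
      indep := by
        rintro v c hc c' hc' ⟨u', v', hadj, hcu, hcv, _⟩
        exact hadj.ne ((huniq hcu hc).trans (huniq hc' hcv))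
      covers := 𝒞.covers
      adj_support := by
        rintro u v c c' hc hc' ⟨u', v', hadj, hcu, hcv, _⟩
        rw [huniq hc hcu, huniq hc' hcv]
        exact hadj
      matching := by
        intro u v c c₁ c₂ hc h1 h2 ha1 ha2
        obtain ⟨u₁, v₁, hadj₁, hcu₁, hcv₁, hor₁⟩ := ha1
        obtain ⟨u₂, v₂, hadj₂, hcu₂, hcv₂, hor₂⟩ := ha2
        have e1 : u₁ = u := huniq hcu₁ hc
        have e2 : v₁ = v := huniq hcv₁ h1
        have e3 : u₂ = u := huniq hcu₂ hc
        have e4 : v₂ = v := huniq hcv₂ h2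
        subst e1; subst e2; subst e3; subst e4
        rcases hor₁ with ⟨hlt₁, he₁⟩ | ⟨hlt₁, he₁⟩ <;>
          rcases hor₂ with ⟨hlt₂, he₂⟩ | ⟨hlt₂, he₂⟩
        · rw [← he₁, ← he₂]
        · exact absurd hlt₂ (lt_asymm hlt₁)
        · exact absurd hlt₂ (lt_asymm hlt₁)
        · exact (hF1 hadj₁.symm).injOn (Finset.mem_coe.mpr h1) (Finset.mem_coe.mpr h2)
            (he₁.trans he₂.symm) } with h𝒞'def
  have h𝒞'H : ∀ {c c'}, 𝒞'.H.Adj c c' ↔ Adj' c c' := by intro c c'; rw [h𝒞'def]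
  have h𝒞'L : 𝒞'.L = 𝒞.L := by rw [h𝒞'def]
  have hfull : 𝒞'.Full := by
    intro u v hadj c hc
    rw [h𝒞'L] at hc ⊢
    rcases lt_or_gt_of_ne hadj.ne with hlt | hlt
    · exact ⟨F u v c, (hF1 hadj).mapsTo (Finset.mem_coe.mpr hc),
        h𝒞'H.mpr ⟨u, v, hadj, hc, (hF1 hadj).mapsTo (Finset.mem_coe.mpr hc),
          Or.inl ⟨hlt, rfl⟩⟩⟩
    · obtain ⟨c', hc', he⟩ := (hF1 hadj.symm).surjOn (Finset.mem_coe.mpr hc)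
      exact ⟨c', hc', h𝒞'H.mpr ⟨u, v, hadj, hc, hc', Or.inr ⟨hlt, he⟩⟩⟩
  have hbad' : ¬ 𝒞'.Colorable := by
    rintro ⟨T, hT1, hT2⟩
    rw [h𝒞'L] at hT1
    exact hbad ⟨T, hT1, fun u v h => hT2 u v (h𝒞'H.mpr (hle h))⟩
  by_cases hcan : 𝒞'.Canonical (k - 1)
  · -- derive a contradiction: 𝒞 would be colorable
    exfalso
    obtain ⟨lam, hbij, hiff⟩ := hcan
    rw [h𝒞'L] at hbij
    have hfail : ¬ ∀ ⦃u v : V⦄, G.Adj u v → ∀ c ∈ 𝒞.L u, ∀ c' ∈ 𝒞.L v,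
        (𝒞.H.Adj c c' ↔ lam c = lam c') := by
      intro h
      exact hnc ⟨lam, hbij, h⟩
    push_neg at hfail
    obtain ⟨u, v, hadj, c, hc, c', hc', hniff⟩ := hfail
    have hiff' : ∀ ⦃x y : V⦄, G.Adj x y → ∀ a ∈ 𝒞.L x, ∀ b ∈ 𝒞.L y,
        (𝒞'.H.Adj a b ↔ lam a = lam b) := by
      intro x y hxy a ha b hb
      have := hiff hxy a (by rw [h𝒞'L]; exact ha) b (by rw [h𝒞'L]; exact hb)
      exact this
    have hiffcc := hiff' hadj c hc c' hc'
    rcases hniff with ⟨hA, hne⟩ | ⟨hnadj, hlamcc⟩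
    · exact hne (hiffcc.mp (h𝒞'H.mpr (hle hA)))
    -- the subgraph G - uv
    set G' : G.Subgraph :=
      { verts := Set.univ
        Adj := fun a b => G.Adj a b ∧ ¬(a = u ∧ b = v) ∧ ¬(a = v ∧ b = u)
        adj_sub := fun h => h.1
        edge_vert := fun _ => trivial
        symm := ⟨by
          rintro a b ⟨h, h2, h3⟩
          exact ⟨h.symm, fun ⟨e1, e2⟩ => h3 ⟨e2, e1⟩, fun ⟨e1, e2⟩ => h2 ⟨e2, e1⟩⟩⟩ } with hG'def
    have hG'ne : G' ≠ ⊤ := by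
      intro h
      have h2 : G'.Adj u v := by rw [h]; exact SimpleGraph.Subgraph.top_adj.mpr hadj
      rw [hG'def] at h2
      exact h2.2.1 ⟨rfl, rfl⟩
    have hlt := hcrit.2 G' hG'ne
    have hcast : (k : ℕ∞) = ((k - 1 : ℕ) : ℕ∞) + 1 := by
      norm_cast
      omega
    rw [hcast] at hlt
    have hcol : G'.coe.Colorable (k - 1) :=
      SimpleGraph.chromaticNumber_le_iff_colorable.mp
        ((ENat.lt_add_one_iff (ENat.coe_ne_top _)).mp hlt)
    obtain ⟨C⟩ := hcol
    set f : V → Fin (k - 1) := fun x => C ⟨x, trivial⟩ with hfdef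
    have hfproper : ∀ {a b : V}, G.Adj a b → ¬((a = u ∧ b = v) ∨ (a = v ∧ b = u)) →
        f a ≠ f b := by
      intro a b hab hne2
      have hG'ab : G'.Adj a b := ⟨hab, fun h => hne2 (Or.inl h), fun h => hne2 (Or.inr h)⟩
      exact C.valid (by exact hG'ab)
    have hfu : f u = f v := by
      by_contra hne2
      have hGcol : G.Colorable (k - 1) := by
        refine ⟨SimpleGraph.Coloring.mk f ?_⟩
        intro a b hab
        by_cases hcase : (a = u ∧ b = v) ∨ (a = v ∧ b = u)
        · rcases hcase with ⟨rfl, rfl⟩ | ⟨rfl, rfl⟩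
          · exact hne2
          · exact fun e => hne2 e.symm
        · exact hfproper hab hcase
      have hchr := SimpleGraph.chromaticNumber_le_iff_colorable.mpr hGcol
      rw [hcrit.1] at hchr
      have : k ≤ k - 1 := by exact_mod_cast hchr
      omega
    set σ : Equiv.Perm (Fin (k - 1)) := Equiv.swap (f u) (lam c) with hσdef
    set g : V → Fin (k - 1) := fun x => σ (f x) with hgdef
    have hgu : g u = lam c := by
      show σ (f u) = lam c
      exact Equiv.swap_apply_left _ _
    have hgv : g v = lam c := by
      show σ (f v) = lam c
      rw [← hfu]
      exact hgu
    have hTex : ∀ x : V, ∃ a, a ∈ 𝒞.L x ∧ lam a = g x := by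
      intro x
      obtain ⟨a, ha, hla⟩ := (hbij x).surjOn (Set.mem_univ (g x))
      exact ⟨a, Finset.mem_coe.mp ha, hla⟩
    choose T hT1 hT2 using hTex
    refine hbad ⟨T, hT1, ?_⟩
    intro x y h
    have hadjxy : G.Adj x y := 𝒞.adj_support (hT1 x) (hT1 y) h
    have hlamxy : lam (T x) = lam (T y) :=
      (hiff' hadjxy (T x) (hT1 x) (T y) (hT1 y)).mp (h𝒞'H.mpr (hle h))
    have hgxy : g x = g y := by rw [← hT2 x, ← hT2 y, hlamxy]
    by_cases hcase : (x = u ∧ y = v) ∨ (x = v ∧ y = u)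
    · have hTu : T u = c := (hbij u).injOn (Finset.mem_coe.mpr (hT1 u))
        (Finset.mem_coe.mpr hc) (by rw [hT2 u, hgu])
      have hTv : T v = c' := (hbij v).injOn (Finset.mem_coe.mpr (hT1 v))
        (Finset.mem_coe.mpr hc') (by rw [hT2 v, hgv, hlamcc])
      rcases hcase with ⟨rfl, rfl⟩ | ⟨rfl, rfl⟩
      · rw [hTu, hTv] at h
        exact hnadj h
      · rw [hTu, hTv] at h
        exact hnadj h.symm
    · exact hfproper hadjxy hcase (σ.injective hgxy)
  · exact ⟨α, 𝒞', fun v => by rw [h𝒞'L]; exact hfold v, hfull, hbad', hcan⟩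
end

section
/- Let G be a k-vertex-critical graph and let J ≅ G ∨ K_t be the graph obtained from G by adding a t-element set U of universal vertices. Suppose that L is a list assignment for J such that |L(x)| ≥ k + t − 1 for each x ∈ V(J) and t ≥ (3/2)·Σ_{v∈V(G)} max{deg_G(v) + t − |L(v)| + 1, 0}. If L is not a constant (k + t − 1)-assignment, then J is L-colorable. -/
set_option linter.unusedSectionVars false
set_option maxHeartbeats 1000000

section AuxLemmas

open Finset

variable {V ι α : Type} [Fintype V] [DecidableEq V] [Fintype ι] [DecidableEq ι] [DecidableEq α]

lemma exists_inj_into (Q : Finset α) (m : ℕ) (h : m ≤ Q.card) :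
    ∃ e : Fin m → α, Function.Injective e ∧ ∀ j, e j ∈ Q := by
  obtain ⟨Q', hsub, hcard⟩ := Finset.exists_subset_card_eq h
  have hcard' : Fintype.card ↥Q' = m := by rw [Fintype.card_coe, hcard]
  let e' := (Fintype.equivFinOfCardEq hcard').symm
  exact ⟨fun j => (e' j : α), fun a b hab => e'.injective (Subtype.coe_injective hab),
    fun j => hsub (e' j).2⟩

lemma colorable_of_chrom_lt {W : Type} (H : SimpleGraph W) {k : ℕ} (hk : 1 ≤ k)
    (h : H.chromaticNumber < (k : ℕ∞)) : H.Colorable (k - 1) := by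
  rw [← SimpleGraph.chromaticNumber_le_iff_colorable]
  have hne : H.chromaticNumber ≠ ⊤ := ne_top_of_lt h
  lift H.chromaticNumber to ℕ using hne with n hn
  rw [Nat.cast_lt] at h
  exact Nat.cast_le.2 (by omega)

lemma injective_of_injOn_univ {f : ι → α} (h : Set.InjOn f (Finset.univ : Finset ι)) :
    Function.Injective f := fun a b hab => h (by simp) (by simp) hab

lemma sdr_extend (Lu : ι → Finset α) (u : Finset ι) (s : Finset ι) (g : ι → α)
    (hsu : s ⊆ u) (hinj : Set.InjOn g s) (hmem : ∀ i ∈ s, g i ∈ Lu i)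
    (hbig : ∀ i ∈ u, i ∉ s → u.card ≤ (Lu i).card) :
    ∃ g' : ι → α, Set.InjOn g' u ∧ (∀ i ∈ u, g' i ∈ Lu i) ∧ ∀ i ∈ s, g' i = g i := by
  have H : ∀ n : ℕ, ∀ (s : Finset ι) (g : ι → α), (u \ s).card = n → s ⊆ u → Set.InjOn g s →
      (∀ i ∈ s, g i ∈ Lu i) → (∀ i ∈ u, i ∉ s → u.card ≤ (Lu i).card) →
      ∃ g' : ι → α, Set.InjOn g' u ∧ (∀ i ∈ u, g' i ∈ Lu i) ∧ ∀ i ∈ s, g' i = g i := by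
    intro n
    induction n using Nat.strong_induction_on with
    | _ n ih =>
      intro s g hn hsu hinj hmem hbig
      rcases eq_or_ne s u with rfl | hne
      · exact ⟨g, hinj, hmem, fun i _ => rfl⟩
      · obtain ⟨i, hiu, his⟩ : ∃ i ∈ u, i ∉ s := by
          by_contra h
          push_neg at h
          exact hne (Finset.Subset.antisymm hsu h)
        have himg : (s.image g).card < (Lu i).card := by
          calc (s.image g).card ≤ s.card := Finset.card_image_le
          _ < u.card := Finset.card_lt_card (Finset.ssubset_iff_of_subset hsu |>.2 ⟨i, hiu, his⟩)
          _ ≤ (Lu i).card := hbig i hiu his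
        obtain ⟨c, hc⟩ : ((Lu i) \ s.image g).Nonempty := by
          rw [← Finset.card_pos]
          have := Finset.le_card_sdiff (s.image g) (Lu i)
          omega
        rw [Finset.mem_sdiff] at hc
        have hcard : (u \ insert i s).card < n := by
          rw [← hn]
          apply Finset.card_lt_card
          constructor
          · intro x hx
            rw [Finset.mem_sdiff] at hx ⊢
            exact ⟨hx.1, fun h => hx.2 (Finset.mem_insert_of_mem h)⟩
          · intro hsub
            have hi : i ∈ u \ s := Finset.mem_sdiff.2 ⟨hiu, his⟩
            have := hsub hi
            rw [Finset.mem_sdiff] at this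
            exact this.2 (Finset.mem_insert_self i s)
        obtain ⟨g', h1, h2, h3⟩ := ih _ hcard (insert i s) (Function.update g i c) rfl
          (Finset.insert_subset hiu hsu)
          (by
            intro x hx y hy hxy
            simp only [Finset.coe_insert, Set.mem_insert_iff] at hx hy
            rcases hx with rfl | hx <;> rcases hy with rfl | hy
            · rfl
            · exfalso
              rw [Function.update_self, Function.update_of_ne (by rintro rfl; exact his hy)] at hxy
              exact hc.2 (hxy ▸ Finset.mem_image_of_mem g hy)
            · exfalso
              rw [Function.update_self, Function.update_of_ne (by rintro rfl; exact his hx)] at hxy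
              exact hc.2 (hxy ▸ Finset.mem_image_of_mem g hx)
            · rw [Function.update_of_ne (by rintro rfl; exact his hx),
                Function.update_of_ne (by rintro rfl; exact his hy)] at hxy
              exact hinj hx hy hxy)
          (by
            intro x hx
            rcases Finset.mem_insert.1 hx with rfl | hxs
            · rw [Function.update_self]; exact hc.1
            · rw [Function.update_of_ne (by rintro rfl; exact his hxs)]; exact hmem x hxs)
          (fun x hxu hxs => hbig x hxu (fun h => hxs (Finset.mem_insert_of_mem h)))
        refine ⟨g', h1, h2, fun x hx => ?_⟩
        rw [h3 x (Finset.mem_insert_of_mem hx),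
          Function.update_of_ne (by rintro rfl; exact his hx)]
  exact H _ s g rfl hsu hinj hmem hbig

lemma greedy_color (G : SimpleGraph V) [DecidableRel G.Adj] (M : V → Finset α)
    (Bad : Finset V) (ψ : V → α) (a₀ : α)
    (hM : ∀ v ∉ Bad, G.degree v + 1 ≤ (M v).card) :
    ∃ g : V → α, ∀ v ∉ Bad, g v ∈ M v ∧
      (∀ w, w ∉ Bad → G.Adj v w → g v ≠ g w) ∧
      (∀ w ∈ Bad, G.Adj v w → g v ≠ ψ w) := by
  classical
  have key : ∀ s : Finset V, Disjoint s Bad → ∃ g : V → α, ∀ v ∈ s, g v ∈ M v ∧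
      (∀ w ∈ s, G.Adj v w → g v ≠ g w) ∧
      (∀ w ∈ Bad, G.Adj v w → g v ≠ ψ w) := by
    intro s
    induction s using Finset.induction_on with
    | empty => exact fun _ => ⟨fun _ => a₀, by simp⟩
    | @insert a s₀ ha ih =>
      intro hdisj
      have hdisj₀ : Disjoint s₀ Bad :=
        Finset.disjoint_of_subset_left (Finset.subset_insert a s₀) hdisj
      obtain ⟨g, hg⟩ := ih hdisj₀
      have haBad : a ∉ Bad := Finset.disjoint_left.1 hdisj (Finset.mem_insert_self a s₀)
      set Forb : Finset α :=
        ((G.neighborFinset a ∩ s₀).image g) ∪ ((G.neighborFinset a ∩ Bad).image ψ) with hForb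
      have hforbcard : Forb.card ≤ G.degree a := by
        calc Forb.card ≤ ((G.neighborFinset a ∩ s₀).image g).card
              + ((G.neighborFinset a ∩ Bad).image ψ).card := Finset.card_union_le _ _
        _ ≤ (G.neighborFinset a ∩ s₀).card + (G.neighborFinset a ∩ Bad).card := by
            gcongr <;> exact Finset.card_image_le
        _ = ((G.neighborFinset a ∩ s₀) ∪ (G.neighborFinset a ∩ Bad)).card := by
            rw [Finset.card_union_of_disjoint]
            exact Finset.disjoint_of_subset_left Finset.inter_subset_right
              (Finset.disjoint_of_subset_right Finset.inter_subset_right hdisj₀)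
        _ ≤ (G.neighborFinset a).card := by
            apply Finset.card_le_card
            intro x hx
            rcases Finset.mem_union.1 hx with h | h
            · exact (Finset.mem_inter.1 h).1
            · exact (Finset.mem_inter.1 h).1
        _ = G.degree a := rfl
      obtain ⟨c, hc⟩ : (M a \ Forb).Nonempty := by
        rw [← Finset.card_pos]
        have h1 := Finset.le_card_sdiff Forb (M a)
        have h2 := hM a haBad
        omega
      rw [Finset.mem_sdiff] at hc
      refine ⟨Function.update g a c, ?_⟩
      intro v hv
      rcases Finset.mem_insert.1 hv with rfl | hvs
      · rw [Function.update_self]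
        refine ⟨hc.1, ?_, ?_⟩
        · intro w hw hadj
          rcases Finset.mem_insert.1 hw with rfl | hws
          · exact absurd hadj G.irrefl
          · rw [Function.update_of_ne (by rintro rfl; exact ha hws)]
            intro hEq
            apply hc.2
            apply Finset.mem_union_left
            exact hEq ▸ Finset.mem_image_of_mem g
              (Finset.mem_inter.2 ⟨(G.mem_neighborFinset _ w).2 hadj, hws⟩)
        · intro w hw hadj hEq
          apply hc.2
          apply Finset.mem_union_right
          exact hEq ▸ Finset.mem_image_of_mem ψ
            (Finset.mem_inter.2 ⟨(G.mem_neighborFinset _ w).2 hadj, hw⟩)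
      · have hva : v ≠ a := by rintro rfl; exact ha hvs
        rw [Function.update_of_ne hva]
        obtain ⟨h1, h2, h3⟩ := hg v hvs
        refine ⟨h1, ?_, h3⟩
        intro w hw hadj
        rcases Finset.mem_insert.1 hw with rfl | hws
        · rw [Function.update_self]
          intro hEq
          apply hc.2
          apply Finset.mem_union_left
          exact hEq ▸ Finset.mem_image_of_mem g
            (Finset.mem_inter.2 ⟨(G.mem_neighborFinset w v).2 hadj.symm, hvs⟩)
        · rw [Function.update_of_ne (by rintro rfl; exact ha hws)]
          exact h2 w hws hadj
  obtain ⟨g, hg⟩ := key (Finset.univ \ Bad) (Finset.sdiff_disjoint)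
  refine ⟨g, fun v hv => ?_⟩
  obtain ⟨h1, h2, h3⟩ := hg v (Finset.mem_sdiff.2 ⟨Finset.mem_univ v, hv⟩)
  exact ⟨h1, fun w hw hadj => h2 w (Finset.mem_sdiff.2 ⟨Finset.mem_univ w, hw⟩) hadj, h3⟩

lemma inner_save (Lu : ι → Finset α) (Lv : Finset α) :
    ∀ (m : ℕ) (s : Finset ι) (g : ι → α), Set.InjOn g s → (∀ i ∈ s, g i ∈ Lu i) →
    ∃ (s' : Finset ι) (g' : ι → α), s ⊆ s' ∧ Set.InjOn g' s' ∧ (∀ i ∈ s', g' i ∈ Lu i) ∧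
      (∀ i ∈ s, g' i = g i) ∧ s'.card ≤ s.card + m ∧
      ((s.image g \ Lv).card + m ≤ (s'.image g' \ Lv).card ∨
        ∀ i ∉ s', Lu i ⊆ Lv ∪ s'.image g') := by
  intro m
  induction m with
  | zero =>
    intro s g hinj hmem
    exact ⟨s, g, Finset.Subset.refl s, hinj, hmem, fun _ _ => rfl, le_refl _, Or.inl (le_refl _)⟩
  | succ m ih =>
    intro s g hinj hmem
    by_cases h : ∃ i, i ∉ s ∧ ∃ c ∈ Lu i, c ∉ Lv ∧ c ∉ s.image g
    · obtain ⟨i, his, c, hcL, hcv, hcimg⟩ := h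
      set s₁ := insert i s with hs₁
      set g₁ := Function.update g i c with hg₁
      have hmono : ∀ j ∈ s, g₁ j = g j := fun j hj =>
        Function.update_of_ne (by rintro rfl; exact his hj) _ _
      have hinj₁ : Set.InjOn g₁ s₁ := by
        intro x hx y hy hxy
        simp only [hs₁, Finset.coe_insert, Set.mem_insert_iff] at hx hy
        rcases hx with rfl | hx <;> rcases hy with rfl | hy
        · rfl
        · exfalso
          rw [hg₁, Function.update_self, Function.update_of_ne (by rintro rfl; exact his hy)] at hxy
          exact hcimg (hxy ▸ Finset.mem_image_of_mem g hy)
        · exfalso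
          rw [hg₁, Function.update_self, Function.update_of_ne (by rintro rfl; exact his hx)] at hxy
          exact hcimg (hxy ▸ Finset.mem_image_of_mem g hx)
        · rw [hmono x hx, hmono y hy] at hxy
          exact hinj hx hy hxy
      have hmem₁ : ∀ j ∈ s₁, g₁ j ∈ Lu j := by
        intro j hj
        rcases Finset.mem_insert.1 hj with rfl | hjs
        · rw [hg₁, Function.update_self]; exact hcL
        · rw [hmono j hjs]; exact hmem j hjs
      obtain ⟨s', g', hsub, hinj', hmem', hres, hcard, hsave⟩ := ih s₁ g₁ hinj₁ hmem₁
      have himg : s₁.image g₁ = insert c (s.image g) := by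
        rw [hs₁, Finset.image_insert, hg₁, Function.update_self]
        congr 1
        apply Finset.image_congr
        intro x hx
        exact hmono x hx
      refine ⟨s', g', Finset.Subset.trans (Finset.subset_insert i s) hsub, hinj', hmem',
        fun j hj => (hres j (Finset.mem_insert_of_mem hj)).trans (hmono j hj), ?_, ?_⟩
      · have : s₁.card = s.card + 1 := Finset.card_insert_of_notMem his
        omega
      · rcases hsave with hsave | hcert
        · left
          have hstep : (s₁.image g₁ \ Lv).card = (s.image g \ Lv).card + 1 := by
            rw [himg, Finset.insert_sdiff_of_notMem _ hcv]
            exact Finset.card_insert_of_notMem (fun hmem' =>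
              hcimg (Finset.mem_sdiff.1 hmem').1)
          omega
        · exact Or.inr hcert
    · push_neg at h
      refine ⟨s, g, Finset.Subset.refl s, hinj, hmem, fun _ _ => rfl, by omega, Or.inr ?_⟩
      intro i his c hc
      by_cases hLv : c ∈ Lv
      · exact Finset.mem_union_left _ hLv
      · exact Finset.mem_union_right _ (h i his c hc hLv)

lemma image_mono_of_ext {s s' : Finset ι} {g g' : ι → α} (hsub : s ⊆ s')
    (hres : ∀ i ∈ s, g' i = g i) : s.image g ⊆ s'.image g' := by
  intro x hx
  obtain ⟨j, hj, rfl⟩ := Finset.mem_image.1 hx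
  exact Finset.mem_image.2 ⟨j, hsub hj, hres j hj⟩

lemma outer_phase (Lu : ι → Finset α) (Lf : V → Finset α) (d : V → ℕ) (a₀ : α) :
    ∀ N : Finset V, ∃ (s : Finset ι) (g : ι → α) (Bad : Finset V),
    Bad ⊆ N ∧ (∀ v ∈ Bad, 1 ≤ d v) ∧ s.card ≤ ∑ v ∈ N, d v ∧ Set.InjOn g s ∧
    (∀ i ∈ s, g i ∈ Lu i) ∧
    (∀ v ∈ N, v ∉ Bad → d v ≤ (s.image g \ Lf v).card) ∧
    (∀ v ∈ Bad, ∀ i ∉ s, Lu i ⊆ Lf v ∪ s.image g) := by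
  intro N
  induction N using Finset.induction_on with
  | empty =>
    refine ⟨∅, fun _ => a₀, ∅, Finset.Subset.refl _, by simp, by simp, by simp, by simp,
      by simp, by simp⟩
  | @insert v N hvN ih =>
    obtain ⟨s, g, Bad, hBadN, hBad1, hcard, hinj, hmem, hsaves, hcerts⟩ := ih
    by_cases hd : d v = 0
    · refine ⟨s, g, Bad, hBadN.trans (Finset.subset_insert v N), hBad1, ?_, hinj, hmem, ?_,
        hcerts⟩
      · rw [Finset.sum_insert hvN]; omega
      · intro w hw hwBad
        rcases Finset.mem_insert.1 hw with rfl | hwN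
        · omega
        · exact hsaves w hwN hwBad
    · obtain ⟨s', g', hsub, hinj', hmem', hres, hcard', hsave⟩ :=
        inner_save Lu (Lf v) (d v) s g hinj hmem
      have himgsub : s.image g ⊆ s'.image g' := image_mono_of_ext hsub hres
      have hsaves' : ∀ w ∈ N, w ∉ Bad → d w ≤ (s'.image g' \ Lf w).card := by
        intro w hw hwBad
        exact (hsaves w hw hwBad).trans (Finset.card_le_card
          (Finset.sdiff_subset_sdiff himgsub (Finset.Subset.refl _)))
      have hcerts' : ∀ w ∈ Bad, ∀ i ∉ s', Lu i ⊆ Lf w ∪ s'.image g' := by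
        intro w hw i hi
        exact (hcerts w hw i (fun h => hi (hsub h))).trans
          (Finset.union_subset_union (Finset.Subset.refl _) himgsub)
      have hcard'' : s'.card ≤ ∑ w ∈ insert v N, d w := by
        rw [Finset.sum_insert hvN]; omega
      rcases hsave with hleft | hcert
      · refine ⟨s', g', Bad, hBadN.trans (Finset.subset_insert v N), hBad1, hcard'',
          hinj', hmem', ?_, hcerts'⟩
        intro w hw hwBad
        rcases Finset.mem_insert.1 hw with rfl | hwN
        · omega
        · exact hsaves' w hwN hwBad
      · have hvBad : v ∉ Bad := fun h => hvN (hBadN h)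
        refine ⟨s', g', insert v Bad, ?_, ?_, hcard'', hinj', hmem', ?_, ?_⟩
        · exact Finset.insert_subset_insert v hBadN
        · intro w hw
          rcases Finset.mem_insert.1 hw with rfl | hwB
          · omega
          · exact hBad1 w hwB
        · intro w hw hwBad
          rcases Finset.mem_insert.1 hw with rfl | hwN
          · exact absurd (Finset.mem_insert_self w Bad) hwBad
          · exact hsaves' w hwN (fun h => hwBad (Finset.mem_insert_of_mem h))
        · intro w hw i hi
          rcases Finset.mem_insert.1 hw with rfl | hwB
          · exact hcert i hi
          · exact hcerts' w hwB i hi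

end AuxLemmas


/-- Let `G` be `k`-vertex-critical and `J = G ∨ K_t` (the `t` added
vertices being universal).  Suppose `L` is a list assignment for `J` with
`|L(x)| ≥ k + t − 1` for every `x ∈ V(J)` and
`t ≥ (3/2)·Σ_{v ∈ V(G)} max{deg_G(v) + t − |L(v)| + 1, 0}`
(the truncated subtraction below computes exactly this maximum with `0`).
If `L` is not a constant `(k + t − 1)`-assignment, then `J` is `L`-colorable. -/
theorem join_list_colorable_of_nonconstant
    {V α : Type} [Fintype V] (G : SimpleGraph V) [DecidableRel G.Adj]
    (k : ℕ) (hcrit : IsKVertexCritical G k)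
    (t : ℕ) (L : V ⊕ Fin t → Finset α)
    (hsize : ∀ x : V ⊕ Fin t, k + t - 1 ≤ (L x).card)
    (hsum : 3 * ∑ v : V, (G.degree v + t + 1 - (L (Sum.inl v)).card) ≤ 2 * t)
    (hnotconst : ¬ ((∀ x y : V ⊕ Fin t, L x = L y) ∧
        ∀ x : V ⊕ Fin t, (L x).card = k + t - 1)) :
    IsListColorable (joinKt G t) L := by
  classical
  obtain ⟨hchrom, hcritS⟩ := hcrit
  by_cases hV : Nonempty V
  · -- main case : V nonempty
    have hk1 : 1 ≤ k := by
      obtain ⟨C⟩ : G.Colorable k :=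
        SimpleGraph.chromaticNumber_le_iff_colorable.mp hchrom.le
      rcases Nat.eq_zero_or_pos k with rfl | h
      · have hF : Fin 0 := C hV.some
        exact hF.elim0
      · exact h
    obtain ⟨a₀, -⟩ : ∃ a : α, True := by
      rcases Nat.eq_zero_or_pos (k + t - 1) with h0 | hpos
      · have hle := Finset.single_le_sum
          (f := fun v => G.degree v + t + 1 - (L (Sum.inl v)).card)
          (fun i _ => Nat.zero_le _) (Finset.mem_univ hV.some)
        beta_reduce at hle
        have ht0 : t = 0 := by omega
        have h1 : 1 ≤ (L (Sum.inl hV.some)).card := by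
          subst ht0; omega
        obtain ⟨a, -⟩ := Finset.card_pos.mp
          (show 0 < (L (Sum.inl hV.some)).card by omega)
        exact ⟨a, trivial⟩
      · obtain ⟨a, -⟩ := Finset.card_pos.mp (lt_of_lt_of_le hpos (hsize (Sum.inl hV.some)))
        exact ⟨a, trivial⟩
    set d : V → ℕ := fun v => G.degree v + t + 1 - (L (Sum.inl v)).card with hd
    have hbridge : Finset.univ.sum d = ∑ v : V, d v := rfl
    obtain ⟨s, g, Bad, -, hBad1, hcards, hinj, hmem, hsaves0, hcerts0⟩ :=
      outer_phase (fun i : Fin t => L (Sum.inr i)) (fun v => L (Sum.inl v)) d a₀ Finset.univ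
    obtain ⟨f, hfinj, hfmem0, hfres⟩ := sdr_extend (fun i : Fin t => L (Sum.inr i))
      Finset.univ s g (Finset.subset_univ s) hinj hmem (by
        intro i _ _
        have h1 := hsize (Sum.inr i)
        rw [Finset.card_univ, Fintype.card_fin]
        omega)
    have hfmem : ∀ i : Fin t, f i ∈ L (Sum.inr i) := fun i => hfmem0 i (Finset.mem_univ i)
    have hfinj' : Function.Injective f := injective_of_injOn_univ hfinj
    set T : Finset α := Finset.univ.image f with hT
    have hTcard : T.card = t := by
      rw [hT, Finset.card_image_of_injective _ hfinj', Finset.card_univ, Fintype.card_fin]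
    have himgT : s.image g ⊆ T := by
      intro x hx
      obtain ⟨j, hj, rfl⟩ := Finset.mem_image.1 hx
      exact Finset.mem_image.2 ⟨j, Finset.mem_univ j, hfres j hj⟩
    have hfmemT : ∀ i : Fin t, f i ∈ T := fun i => Finset.mem_image_of_mem f (Finset.mem_univ i)
    have hsavesT : ∀ v, v ∉ Bad → d v ≤ (T \ L (Sum.inl v)).card := fun v hv =>
      (hsaves0 v (Finset.mem_univ v) hv).trans (Finset.card_le_card
        (Finset.sdiff_subset_sdiff himgT (Finset.Subset.refl _)))
    have hres : ∀ v, v ∉ Bad → G.degree v + 1 ≤ ((L (Sum.inl v)) \ T).card := by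
      intro v hv
      have h1 := Finset.card_inter_add_card_sdiff (L (Sum.inl v)) T
      have h2 := Finset.card_inter_add_card_sdiff T (L (Sum.inl v))
      have h3 := hsavesT v hv
      have h4 := hsize (Sum.inl v)
      have h5 : (L (Sum.inl v) ∩ T).card = (T ∩ L (Sum.inl v)).card := by
        rw [Finset.inter_comm]
      have hd' : d v = G.degree v + t + 1 - (L (Sum.inl v)).card := rfl
      omega
    have hQblock : Bad.Nonempty → ∃ i₀ : Fin t, i₀ ∉ s ∧
        (∀ v ∈ Bad, (L (Sum.inr i₀) \ T) ⊆ L (Sum.inl v)) ∧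
        k - 1 ≤ (L (Sum.inr i₀) \ T).card := by
      rintro ⟨vb, hvb⟩
      have hD1 : 1 ≤ ∑ v : V, d v :=
        le_trans (hBad1 vb hvb)
          (Finset.single_le_sum (fun i _ => Nat.zero_le _) (Finset.mem_univ vb))
      have hst : s.card < t := by omega
      obtain ⟨i₀, hi₀⟩ : ∃ i₀ : Fin t, i₀ ∉ s := by
        by_contra h
        push_neg at h
        have hle : (Finset.univ : Finset (Fin t)).card ≤ s.card :=
          Finset.card_le_card (fun i _ => h i)
        rw [Finset.card_univ, Fintype.card_fin] at hle
        omega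
      refine ⟨i₀, hi₀, ?_, ?_⟩
      · intro v hv c hc
        rw [Finset.mem_sdiff] at hc
        rcases Finset.mem_union.1 (hcerts0 v hv i₀ hi₀ hc.1) with h | h
        · exact h
        · exact absurd (himgT h) hc.2
      · have h1 := Finset.le_card_sdiff T (L (Sum.inr i₀))
        have h2 := hsize (Sum.inr i₀)
        omega
    by_cases hBadUniv : Bad = Finset.univ
    · -- CASE B : every vertex is bad
      have hallbad : ∀ v : V, v ∈ Bad := fun v => hBadUniv ▸ Finset.mem_univ v
      obtain ⟨i₀, hi₀, hQsub0, hQcard⟩ := hQblock ⟨hV.some, hallbad hV.some⟩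
      set Q : Finset α := L (Sum.inr i₀) \ T with hQ
      have hQsub : ∀ v : V, Q ⊆ L (Sum.inl v) := fun v => hQsub0 v (hallbad v)
      have hQT : Disjoint Q T := Finset.sdiff_disjoint
      by_cases hQk : k ≤ Q.card
      · obtain ⟨C⟩ : G.Colorable k :=
          SimpleGraph.chromaticNumber_le_iff_colorable.mp hchrom.le
        obtain ⟨e, heinj, heQ⟩ := exists_inj_into Q k hQk
        refine ⟨Sum.elim (fun v => e (C v)) f, ?_, ?_⟩
        · rintro (v | i)
          · exact hQsub v (heQ _)
          · exact hfmem i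
        · rintro (v | i) (w | j) hadj
          · exact fun hEq => C.valid hadj (heinj hEq)
          · intro hEq
            have hEq' : e (C v) = f j := hEq
            exact Finset.disjoint_left.1 hQT (heQ _) (hEq' ▸ hfmemT j)
          · intro hEq
            have hEq' : f i = e (C w) := hEq
            exact Finset.disjoint_left.1 hQT (heQ _) (hEq' ▸ hfmemT i)
          · exact fun hEq => (hadj : i ≠ j) (hfinj' hEq)
      · have hQeq : Q.card = k - 1 := by omega
        by_cases hex : ∃ v : V, ∃ c ∈ L (Sum.inl v), c ∉ Q ∧ c ∉ T
        · obtain ⟨vs, cs, hcmem, hcQ, hcT⟩ := hex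
          have hSne : ({vs}ᶜ : Set V) ≠ Set.univ := by
            intro h
            have hm : vs ∈ ({vs}ᶜ : Set V) := h ▸ Set.mem_univ vs
            exact hm rfl
          obtain ⟨CB⟩ := colorable_of_chrom_lt _ hk1 (hcritS _ hSne)
          obtain ⟨e, heinj, heQ⟩ := exists_inj_into Q (k - 1) hQcard
          refine ⟨Sum.elim (fun v => if h : v = vs then cs
            else e (CB ⟨v, by simp [h]⟩)) f, ?_, ?_⟩
          · rintro (v | i)
            · by_cases h : v = vs
              · rw [Sum.elim_inl, dif_pos h, h]; exact hcmem
              · rw [Sum.elim_inl, dif_neg h]; exact hQsub v (heQ _)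
            · exact hfmem i
          · rintro (v | i) (w | j) hadj
            · have hG : G.Adj v w := hadj
              simp only [Sum.elim_inl]
              by_cases h1 : v = vs <;> by_cases h2 : w = vs
              · exact absurd (h1.trans h2.symm ▸ hG) G.irrefl
              · rw [dif_pos h1, dif_neg h2]
                exact fun hEq => hcQ (hEq ▸ heQ _)
              · rw [dif_neg h1, dif_pos h2]
                exact fun hEq => hcQ (hEq ▸ heQ _)
              · rw [dif_neg h1, dif_neg h2]
                refine fun hEq => CB.valid ?_ (heinj hEq)
                exact hG
            · simp only [Sum.elim_inl, Sum.elim_inr]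
              by_cases h1 : v = vs
              · rw [dif_pos h1]; exact fun hEq => hcT (hEq ▸ hfmemT j)
              · rw [dif_neg h1]
                exact fun hEq => Finset.disjoint_left.1 hQT (heQ _) (hEq ▸ hfmemT j)
            · simp only [Sum.elim_inl, Sum.elim_inr]
              by_cases h1 : w = vs
              · rw [dif_pos h1]; exact fun hEq => hcT (hEq.symm ▸ hfmemT i)
              · rw [dif_neg h1]
                exact fun hEq => Finset.disjoint_left.1 hQT (heQ _) (hEq.symm ▸ hfmemT i)
            · exact fun hEq => (hadj : i ≠ j) (hfinj' hEq)
        · push_neg at hex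
          have hLfeq : ∀ v : V, L (Sum.inl v) = Q ∪ T := by
            intro v
            have hsub : L (Sum.inl v) ⊆ Q ∪ T := by
              intro c hc
              by_cases hcQ : c ∈ Q
              · exact Finset.mem_union_left _ hcQ
              · exact Finset.mem_union_right _ (hex v c hc hcQ)
            refine (Finset.eq_of_subset_of_card_le hsub ?_)
            rw [Finset.card_union_of_disjoint hQT, hQeq, hTcard]
            have := hsize (Sum.inl v)
            omega
          have hQTcard : (Q ∪ T).card = k + t - 1 := by
            rw [Finset.card_union_of_disjoint hQT, hQeq, hTcard]
            omega
          by_cases hex2 : ∃ i : Fin t, ∃ c ∈ L (Sum.inr i), c ∉ Q ∧ c ∉ T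
          · obtain ⟨i₁, cs, hc1, hc2, hc3⟩ := hex2
            set f' := Function.update f i₁ cs with hf'
            have hf'mem : ∀ i, f' i ∈ L (Sum.inr i) := by
              intro i
              by_cases h : i = i₁
              · rw [hf', h, Function.update_self]; exact hc1
              · rw [hf', Function.update_of_ne h]; exact hfmem i
            have hf'inj : Function.Injective f' := by
              intro a b hab
              by_cases ha : a = i₁ <;> by_cases hb : b = i₁
              · rw [ha, hb]
              · rw [hf', ha, Function.update_self, Function.update_of_ne hb] at hab
                exact absurd (hab ▸ hfmemT b) hc3
              · rw [hf', hb, Function.update_self, Function.update_of_ne ha] at hab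
                exact absurd (hab ▸ hfmemT a) hc3
              · rw [hf', Function.update_of_ne ha, Function.update_of_ne hb] at hab
                exact hfinj' hab
            have hfQ : f i₁ ∉ Q := Finset.disjoint_right.1 hQT (hfmemT i₁)
            set Q' : Finset α := insert (f i₁) Q with hQ'
            have hQ'card : k ≤ Q'.card := by
              rw [hQ', Finset.card_insert_of_notMem hfQ, hQeq]
              omega
            have hQ'sub : ∀ v : V, Q' ⊆ L (Sum.inl v) := by
              intro v
              rw [hLfeq v, hQ']
              exact Finset.insert_subset (Finset.mem_union_right _ (hfmemT i₁))
                Finset.subset_union_left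
            have hQ'T' : ∀ x ∈ Q', ∀ i, x ≠ f' i := by
              intro x hx i
              rcases Finset.mem_insert.1 hx with rfl | hxQ
              · by_cases h : i = i₁
                · rw [hf', h, Function.update_self]
                  exact fun hEq => hc3 (hEq ▸ hfmemT i₁)
                · rw [hf', Function.update_of_ne h]
                  exact fun hEq => h ((hfinj' hEq).symm)
              · by_cases h : i = i₁
                · rw [hf', h, Function.update_self]
                  exact fun hEq => hc2 (hEq ▸ hxQ)
                · rw [hf', Function.update_of_ne h]
                  exact fun hEq => Finset.disjoint_left.1 hQT hxQ (hEq ▸ hfmemT i)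
            obtain ⟨C⟩ : G.Colorable k :=
              SimpleGraph.chromaticNumber_le_iff_colorable.mp hchrom.le
            obtain ⟨e, heinj, heQ⟩ := exists_inj_into Q' k hQ'card
            refine ⟨Sum.elim (fun v => e (C v)) f', ?_, ?_⟩
            · rintro (v | i)
              · exact hQ'sub v (heQ _)
              · exact hf'mem i
            · rintro (v | i) (w | j) hadj
              · exact fun hEq => C.valid hadj (heinj hEq)
              · exact hQ'T' _ (heQ _) j
              · exact fun hEq => hQ'T' _ (heQ _) i hEq.symm
              · exact fun hEq => (hadj : i ≠ j) (hf'inj hEq)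
          · push_neg at hex2
            exfalso
            apply hnotconst
            have hLueq : ∀ i : Fin t, L (Sum.inr i) = Q ∪ T := by
              intro i
              have hsub : L (Sum.inr i) ⊆ Q ∪ T := by
                intro c hc
                by_cases hcQ : c ∈ Q
                · exact Finset.mem_union_left _ hcQ
                · exact Finset.mem_union_right _ (hex2 i c hc hcQ)
              refine Finset.eq_of_subset_of_card_le hsub ?_
              rw [Finset.card_union_of_disjoint hQT, hQeq, hTcard]
              have := hsize (Sum.inr i)
              omega
            have hall : ∀ x : V ⊕ Fin t, L x = Q ∪ T := by
              rintro (v | i)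
              · exact hLfeq v
              · exact hLueq i
            exact ⟨fun x y => (hall x).trans (hall y).symm,
              fun x => by rw [hall x, hQTcard]⟩
    · -- CASE A : some vertex is not bad
      obtain ⟨v₀, hv₀⟩ : ∃ v₀, v₀ ∉ Bad := by
        by_contra h
        push_neg at h
        exact hBadUniv (Finset.eq_univ_iff_forall.2 h)
      have hψpack : ∃ ψ : V → α, ∀ v ∈ Bad, ψ v ∈ L (Sum.inl v) ∧ ψ v ∉ T ∧
          ∀ w ∈ Bad, G.Adj v w → ψ v ≠ ψ w := by
        rcases Finset.eq_empty_or_nonempty Bad with rfl | hBadne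
        · exact ⟨fun _ => a₀, by simp⟩
        · obtain ⟨i₀, hi₀, hQsub, hQcard⟩ := hQblock hBadne
          have hSne : (↑Bad : Set V) ≠ Set.univ := by
            intro h
            exact hv₀ (by rw [← Finset.mem_coe, h]; trivial)
          obtain ⟨CB⟩ := colorable_of_chrom_lt _ hk1 (hcritS _ hSne)
          obtain ⟨e, heinj, heQ⟩ := exists_inj_into (L (Sum.inr i₀) \ T) (k - 1) hQcard
          refine ⟨fun v => if h : v ∈ Bad then e (CB ⟨v, h⟩) else a₀, ?_⟩
          intro v hv
          beta_reduce
          rw [dif_pos hv]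
          refine ⟨hQsub v hv (heQ _), (Finset.mem_sdiff.1 (heQ (CB ⟨v, hv⟩))).2, ?_⟩
          intro w hw hadj
          rw [dif_pos hw]
          refine fun hEq => CB.valid ?_ (heinj hEq)
          exact hadj
      obtain ⟨ψ, hψ⟩ := hψpack
      obtain ⟨g₂, hg₂⟩ := greedy_color G (fun v => L (Sum.inl v) \ T) Bad ψ a₀
        (fun v hv => hres v hv)
      refine ⟨Sum.elim (fun v => if v ∈ Bad then ψ v else g₂ v) f, ?_, ?_⟩
      · rintro (v | i)
        · by_cases h : v ∈ Bad
          · rw [Sum.elim_inl, if_pos h]; exact (hψ v h).1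
          · rw [Sum.elim_inl, if_neg h]; exact (Finset.mem_sdiff.1 (hg₂ v h).1).1
        · exact hfmem i
      · rintro (v | i) (w | j) hadj
        · have hG : G.Adj v w := hadj
          simp only [Sum.elim_inl]
          by_cases h1 : v ∈ Bad <;> by_cases h2 : w ∈ Bad
          · rw [if_pos h1, if_pos h2]; exact (hψ v h1).2.2 w h2 hG
          · rw [if_pos h1, if_neg h2]
            exact fun hEq => ((hg₂ w h2).2.2 v h1 hG.symm) hEq.symm
          · rw [if_neg h1, if_pos h2]; exact (hg₂ v h1).2.2 w h2 hG
          · rw [if_neg h1, if_neg h2]; exact (hg₂ v h1).2.1 w h2 hG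
        · simp only [Sum.elim_inl, Sum.elim_inr]
          by_cases h1 : v ∈ Bad
          · rw [if_pos h1]; exact fun hEq => (hψ v h1).2.1 (hEq ▸ hfmemT j)
          · rw [if_neg h1]
            exact fun hEq => (Finset.mem_sdiff.1 (hg₂ v h1).1).2 (hEq ▸ hfmemT j)
        · simp only [Sum.elim_inl, Sum.elim_inr]
          by_cases h1 : w ∈ Bad
          · rw [if_pos h1]; exact fun hEq => (hψ w h1).2.1 (hEq.symm ▸ hfmemT i)
          · rw [if_neg h1]
            exact fun hEq => (Finset.mem_sdiff.1 (hg₂ w h1).1).2 (hEq.symm ▸ hfmemT i)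
        · exact fun hEq => (hadj : i ≠ j) (hfinj' hEq)
  · -- V empty
    have hVempty : IsEmpty V := not_nonempty_iff.1 hV
    have hk0 : k = 0 := by
      have h0 : G.chromaticNumber = 0 := G.chromaticNumber_eq_zero_of_isEmpty
      rw [h0] at hchrom
      exact_mod_cast hchrom.symm
    subst hk0
    rcases Nat.eq_zero_or_pos t with rfl | ht1
    · exact absurd ⟨fun x => isEmptyElim x, fun x => isEmptyElim x⟩ hnotconst
    · by_cases hbig : ∃ i₁ : Fin t, t ≤ (L (Sum.inr i₁)).card
      · obtain ⟨i₁, hi₁⟩ := hbig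
        obtain ⟨a₀, -⟩ : ∃ a : α, a ∈ L (Sum.inr i₁) := Finset.card_pos.mp (by omega)
        obtain ⟨g', hinj', hmem', -⟩ := sdr_extend (fun i : Fin t => L (Sum.inr i))
          (Finset.univ.erase i₁) ∅ (fun _ => a₀) (Finset.empty_subset _) (by simp) (by simp)
          (by
            intro i hi _
            rw [Finset.card_erase_of_mem (Finset.mem_univ i₁), Finset.card_univ,
              Fintype.card_fin]
            have := hsize (Sum.inr i)
            omega)
        obtain ⟨f, hfinj, hfmem, -⟩ := sdr_extend (fun i : Fin t => L (Sum.inr i))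
          Finset.univ (Finset.univ.erase i₁) g' (Finset.subset_univ _) hinj' hmem'
          (by
            intro i _ hi
            have hii : i = i₁ := by
              by_contra hne
              exact hi (Finset.mem_erase.2 ⟨hne, Finset.mem_univ i⟩)
            subst hii
            rw [Finset.card_univ, Fintype.card_fin]
            exact hi₁)
        have hfinj' := injective_of_injOn_univ hfinj
        refine ⟨Sum.elim (fun v => isEmptyElim v) f, ?_, ?_⟩
        · rintro (v | i)
          · exact isEmptyElim v
          · exact hfmem i (Finset.mem_univ i)
        · rintro (v | i) (w | j) hadj
          · exact isEmptyElim v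
          · exact isEmptyElim v
          · exact isEmptyElim w
          · exact fun hEq => (hadj : i ≠ j) (hfinj' hEq)
      · push_neg at hbig
        have hcards : ∀ i : Fin t, (L (Sum.inr i)).card = t - 1 := by
          intro i
          have h1 := hsize (Sum.inr i)
          have h2 := hbig i
          omega
        obtain ⟨x, y, hxy⟩ : ∃ x y : V ⊕ Fin t, L x ≠ L y := by
          by_contra h
          push_neg at h
          refine absurd ⟨h, ?_⟩ hnotconst
          rintro (v | i)
          · exact isEmptyElim v
          · rw [hcards i]; omega
        obtain ⟨a, b, hab⟩ : ∃ a b : Fin t, L (Sum.inr a) ≠ L (Sum.inr b) := by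
          cases x with
          | inl v => exact isEmptyElim v
          | inr a =>
            cases y with
            | inl v => exact isEmptyElim v
            | inr b => exact ⟨a, b, hxy⟩
        have hanb : a ≠ b := fun h => hab (h ▸ rfl)
        obtain ⟨c, hca, hcb⟩ : ∃ c, c ∈ L (Sum.inr a) ∧ c ∉ L (Sum.inr b) := by
          by_contra h
          push_neg at h
          refine hab (Finset.eq_of_subset_of_card_le (fun z hz => h z hz) ?_)
          rw [hcards a, hcards b]
        obtain ⟨g', hinj', hmem', hres'⟩ := sdr_extend (fun i : Fin t => L (Sum.inr i))
          (Finset.univ.erase b) {a} (fun _ => c)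
          (Finset.singleton_subset_iff.2 (Finset.mem_erase.2 ⟨hanb, Finset.mem_univ a⟩))
          (fun x hx y hy _ => by
            simp only [Finset.coe_singleton, Set.mem_singleton_iff] at hx hy
            rw [hx, hy])
          (by simp [hca])
          (by
            intro i hi _
            rw [Finset.card_erase_of_mem (Finset.mem_univ b), Finset.card_univ,
              Fintype.card_fin]
            rw [hcards i])
        have hga : g' a = c := hres' a (Finset.mem_singleton_self a)
        have hcimg : c ∈ (Finset.univ.erase b).image g' :=
          Finset.mem_image.2 ⟨a, Finset.mem_erase.2 ⟨hanb, Finset.mem_univ a⟩, hga⟩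
        obtain ⟨c', hc'⟩ : ((L (Sum.inr b)) \ (Finset.univ.erase b).image g').Nonempty := by
          rw [← Finset.card_pos]
          have h1 : ((L (Sum.inr b)) ∩ (Finset.univ.erase b).image g') ⊆
              ((Finset.univ.erase b).image g').erase c := by
            intro z hz
            rw [Finset.mem_inter] at hz
            exact Finset.mem_erase.2 ⟨fun h => hcb (h ▸ hz.1), hz.2⟩
          have h2 := Finset.card_le_card h1
          have h3 : (((Finset.univ.erase b).image g').erase c).card =
              ((Finset.univ.erase b).image g').card - 1 :=
            Finset.card_erase_of_mem hcimg
          have h4 : ((Finset.univ.erase b).image g').card ≤ t - 1 := by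
            calc ((Finset.univ.erase b).image g').card ≤ (Finset.univ.erase b).card :=
              Finset.card_image_le
            _ = t - 1 := by
              rw [Finset.card_erase_of_mem (Finset.mem_univ b), Finset.card_univ,
                Fintype.card_fin]
          have h5 := Finset.card_inter_add_card_sdiff (L (Sum.inr b))
            ((Finset.univ.erase b).image g')
          have h6 := hcards b
          have h7 : 1 ≤ ((Finset.univ.erase b).image g').card :=
            Finset.card_pos.2 ⟨c, hcimg⟩
          omega
        rw [Finset.mem_sdiff] at hc'
        set f := Function.update g' b c' with hf
        have hbnerase : b ∉ Finset.univ.erase b := fun h => (Finset.mem_erase.1 h).1 rfl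
        have hfmem : ∀ i : Fin t, f i ∈ L (Sum.inr i) := by
          intro i
          by_cases h : i = b
          · rw [hf, h, Function.update_self]; exact hc'.1
          · rw [hf, Function.update_of_ne h]
            exact hmem' i (Finset.mem_erase.2 ⟨h, Finset.mem_univ i⟩)
        have hfinj' : Function.Injective f := by
          intro x y hxy
          by_cases hx : x = b <;> by_cases hy : y = b
          · rw [hx, hy]
          · rw [hf, hx, Function.update_self, Function.update_of_ne hy] at hxy
            exact absurd (Finset.mem_image.2 ⟨y, Finset.mem_erase.2 ⟨hy, Finset.mem_univ y⟩,
              hxy.symm⟩) hc'.2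
          · rw [hf, hy, Function.update_self, Function.update_of_ne hx] at hxy
            exact absurd (Finset.mem_image.2 ⟨x, Finset.mem_erase.2 ⟨hx, Finset.mem_univ x⟩,
              hxy⟩) hc'.2
          · rw [hf, Function.update_of_ne hx, Function.update_of_ne hy] at hxy
            exact hinj' (Finset.mem_coe.2 (Finset.mem_erase.2 ⟨hx, Finset.mem_univ x⟩))
              (Finset.mem_coe.2 (Finset.mem_erase.2 ⟨hy, Finset.mem_univ y⟩)) hxy
        refine ⟨Sum.elim (fun v => isEmptyElim v) f, ?_, ?_⟩
        · rintro (v | i)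
          · exact isEmptyElim v
          · exact hfmem i
        · rintro (v | i) (w | j) hadj
          · exact isEmptyElim v
          · exact isEmptyElim v
          · exact isEmptyElim w
          · exact fun hEq => (hadj : i ≠ j) (hfinj' hEq)
end
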